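/- arXiv:2504.12922 — 5 statements merged into one kernel-verified Lean document; each statement's English description precedes it below -/
import Mathlib

section
/- Let (Ω,F,P) be a probability space, I a nonempty index set, and (X_i)_{i∈I}, (V_i)_{i∈I} two families of nonnegative real-valued random variables such that for all i ∈ I, almost surely: for all ε, l > 0, if X_i ∈ [ε, l] then V_i ≥ π(ε, l), where π : (0,∞)² → (0,∞). Let K > 0 satisfy K ≥ E[X_i] for all i ∈ I, and suppose (X_i)_{i∈I} is uniformly integrable with modulus μ : (0,∞) → (0,∞), i.e. for every event A ∈ F, every ε > 0 and every i ∈ I, P(A) ≤ μ(ε) implies E[X_i·1_A] ≤ ε. Define τ(ε) := π(ε/4, K/μ(ε/4)) · μ(ε/4)/2. Then for all i ∈ I and all ε > 0: if E[V_i] < τ(ε) then E[X_i] < ε. -/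
/-!
Fix `e = ε/4`, `m = μ(e)` and `l = K/m`, and split `Ω` according to whether `X_i < e`,
`X_i ∈ [e, l]` or `X_i > l`. On the first piece `X_i < e`. On the middle piece `V_i ≥ π(e, l)`,
so Markov's inequality for `V_i` bounds its probability by `E[V_i]/π(e, l) < m/2`; Markov's
inequality for `X_i` bounds the probability of the last piece by `K/l = m`. Uniform integrability
then bounds the integral of `X_i` over each of these two pieces by `e`, so `E[X_i] ≤ 3e < ε`.
-/

open MeasureTheory

section

variable {Ω : Type*} {mΩ : MeasurableSpace Ω} {μ : Measure Ω}

lemma ofReal_mul_measure_le_lintegral_of_le_on {f : Ω → ℝ} {s : Set Ω} (hs : MeasurableSet s)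
    {c : ℝ} (hcf : ∀ᵐ ω ∂μ, ω ∈ s → c ≤ f ω) :
    ENNReal.ofReal c * μ s ≤ ∫⁻ ω, ENNReal.ofReal (f ω) ∂μ :=
  calc ENNReal.ofReal c * μ s = ∫⁻ _ in s, ENNReal.ofReal c ∂μ := (setLIntegral_const s _).symm
    _ ≤ ∫⁻ ω in s, ENNReal.ofReal (f ω) ∂μ :=
      lintegral_mono_ae <| (ae_restrict_iff' hs).2 <| hcf.mono fun _ h hω ↦
        ENNReal.ofReal_le_ofReal (h hω)
    _ ≤ ∫⁻ ω, ENNReal.ofReal (f ω) ∂μ := setLIntegral_le_lintegral s _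

lemma measure_le_of_le_on_of_lintegral_le {f : Ω → ℝ} {s : Set Ω} (hs : MeasurableSet s)
    {c q : ℝ} (hc : 0 < c) (hcf : ∀ᵐ ω ∂μ, ω ∈ s → c ≤ f ω)
    (hf : ∫⁻ ω, ENNReal.ofReal (f ω) ∂μ ≤ ENNReal.ofReal (c * q)) :
    μ s ≤ ENNReal.ofReal q := by
  have hcs : ENNReal.ofReal c * μ s ≤ ENNReal.ofReal c * ENNReal.ofReal q := by
    rw [← ENNReal.ofReal_mul hc.le]
    exact (ofReal_mul_measure_le_lintegral_of_le_on hs hcf).trans hf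
  exact (ENNReal.mul_le_mul_iff_right (by simpa using hc) ENNReal.ofReal_ne_top).1 hcs

lemma measure_ge_le_ofReal_integral_div {f : Ω → ℝ} (hf0 : 0 ≤ᵐ[μ] f) (hf : Integrable f μ)
    {l : ℝ} (hl : 0 < l) :
    μ {ω | l ≤ f ω} ≤ ENNReal.ofReal ((∫ ω, f ω ∂μ) / l) := by
  rw [ENNReal.ofReal_div_of_pos hl, ofReal_integral_eq_lintegral_ofReal hf hf0]
  calc μ {ω | l ≤ f ω} ≤ μ {ω | ENNReal.ofReal l ≤ ENNReal.ofReal (f ω)} :=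
        measure_mono fun _ h ↦ ENNReal.ofReal_le_ofReal h
    _ ≤ _ := meas_ge_le_lintegral_div hf.aemeasurable.ennreal_ofReal (by simpa using hl)
        ENNReal.ofReal_ne_top

lemma setIntegral_le_of_ae_le [IsZeroOrProbabilityMeasure μ] {f : Ω → ℝ} {s : Set Ω}
    (hs : MeasurableSet s) (hf : IntegrableOn f s μ) {c : ℝ} (hc : 0 ≤ c)
    (hfc : ∀ᵐ ω ∂μ, ω ∈ s → f ω ≤ c) :
    ∫ ω in s, f ω ∂μ ≤ c :=
  calc ∫ ω in s, f ω ∂μ ≤ ∫ _ in s, c ∂μ :=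
        setIntegral_mono_ae_restrict hf (integrable_const c) ((ae_restrict_iff' hs).2 hfc)
    _ = μ.real s * c := by rw [setIntegral_const, smul_eq_mul]
    _ ≤ c := mul_le_of_le_one_left hc measureReal_le_one

theorem integral_le_three_mul_of_lintegral_le [IsProbabilityMeasure μ] {X V : Ω → ℝ}
    (hX0 : 0 ≤ᵐ[μ] X) (hX : Integrable X μ) {e l m p : ℝ} (he : 0 < e) (hl : 0 < l) (hp : 0 < p)
    (hXV : ∀ᵐ ω ∂μ, X ω ∈ Set.Icc e l → p ≤ V ω) (hXm : ∫ ω, X ω ∂μ ≤ l * m)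
    (hui : ∀ A, MeasurableSet A → μ A ≤ ENNReal.ofReal m → ∫ ω in A, X ω ∂μ ≤ e)
    (hV : ∫⁻ ω, ENNReal.ofReal (V ω) ∂μ ≤ ENNReal.ofReal (p * m)) :
    ∫ ω, X ω ∂μ ≤ 3 * e := by
  -- `hui` only applies to measurable sets, so cut `Ω` along a measurable version `Y` of `X`.
  obtain ⟨Y, hY, hXY⟩ := hX.aemeasurable
  set S := {ω | e ≤ Y ω}
  set T := {ω | Y ω ≤ l}
  have hS : MeasurableSet S := measurableSet_le measurable_const hY
  have hT : MeasurableSet T := measurableSet_le hY measurable_const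
  have hlow : ∫ ω in Sᶜ, X ω ∂μ ≤ e :=
    setIntegral_le_of_ae_le hS.compl hX.integrableOn he.le <| by
      filter_upwards [hXY] with ω hω hωS
      exact hω ▸ le_of_not_ge hωS
  have hmid : ∫ ω in S ∩ T, X ω ∂μ ≤ e :=
    hui _ (hS.inter hT) <| measure_le_of_le_on_of_lintegral_le (hS.inter hT) hp
      (by filter_upwards [hXV, hXY] with ω h hω hωST; exact h (hω ▸ hωST)) hV
  have hhigh : ∫ ω in S \ T, X ω ∂μ ≤ e :=
    hui _ (hS.diff hT) <|
      calc μ (S \ T) ≤ μ {ω | l ≤ Y ω} := measure_mono fun _ h ↦ (le_of_not_ge h.2 : l ≤ _)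
        _ ≤ ENNReal.ofReal ((∫ ω, Y ω ∂μ) / l) :=
          measure_ge_le_ofReal_integral_div (hX0.trans_eq hXY) (hX.congr hXY) hl
        _ ≤ ENNReal.ofReal m := by
          refine ENNReal.ofReal_le_ofReal ?_
          rw [← integral_congr_ae hXY, div_le_iff₀ hl]
          linarith
  rw [← integral_add_compl hS hX, ← integral_inter_add_sdiff hT hX.integrableOn]
  linarith

end

theorem regularity_modulus_from_uniform_integrability_general
    {Ω : Type*} {mΩ : MeasurableSpace Ω} {P : Measure Ω} [IsProbabilityMeasure P]
    {I : Type*} (X V : I → Ω → ℝ)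
    (hXnn : ∀ i, ∀ᵐ ω ∂P, 0 ≤ X i ω)
    (hXint : ∀ i, Integrable (X i) P)
    (π : ℝ → ℝ → ℝ) (hπpos : ∀ ε > (0:ℝ), ∀ l > (0:ℝ), 0 < π ε l)
    -- almost surely: X_i ∈ [ε, l] → V_i ≥ π(ε, l), for all ε, l > 0
    (hπ : ∀ i, ∀ᵐ ω ∂P, ∀ ε > (0:ℝ), ∀ l > (0:ℝ),
        X i ω ∈ Set.Icc ε l → π ε l ≤ V i ω)
    (K : ℝ) (hKpos : 0 < K) (hK : ∀ i, ∫ ω, X i ω ∂P ≤ K)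
    -- uniform integrability of (X_i) with modulus μ
    (μ : ℝ → ℝ) (hμpos : ∀ ε > (0:ℝ), 0 < μ ε)
    (hui : ∀ A : Set Ω, MeasurableSet A → ∀ ε > (0:ℝ), ∀ i,
        P A ≤ ENNReal.ofReal (μ ε) → ∫ ω in A, X i ω ∂P ≤ ε) :
    ∀ i, ∀ ε > (0:ℝ),
      (∫⁻ ω, ENNReal.ofReal (V i ω) ∂P)
          < ENNReal.ofReal (π (ε/4) (K / μ (ε/4)) * (μ (ε/4) / 2)) →
      ∫ ω, X i ω ∂P < ε := by
  intro i ε hε hV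
  have he : 0 < ε / 4 := by positivity
  have hm : 0 < μ (ε / 4) := hμpos _ he
  have hl : 0 < K / μ (ε / 4) := div_pos hKpos hm
  have hp : 0 < π (ε / 4) (K / μ (ε / 4)) := hπpos _ he _ hl
  have hXK : ∫ ω, X i ω ∂P ≤ K / μ (ε / 4) * μ (ε / 4) := by
    rw [div_mul_cancel₀ _ hm.ne']
    exact hK i
  have hVle := hV.le.trans <| ENNReal.ofReal_le_ofReal <|
    mul_le_mul_of_nonneg_left (half_le_self hm.le) hp.le
  have := integral_le_three_mul_of_lintegral_le (hXnn i) (hXint i) he hl hp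
    ((hπ i).mono fun _ h ↦ h _ he _ hl) hXK (fun A hA ↦ hui A hA _ he i) hVle
  linarith

/-- Regularity modulus in expectation from a pointwise modulus `π` under uniform integrability:
with `τ(ε) := π(ε/4, K/μ(ε/4))·μ(ε/4)/2`, `E[V_i] < τ(ε)` implies `E[X_i] < ε`.
(The expectation `E[V_i]` is taken as the possibly infinite Lebesgue integral.) -/
theorem regularity_modulus_from_uniform_integrability
    {Ω : Type*} {mΩ : MeasurableSpace Ω} {P : Measure Ω} [IsProbabilityMeasure P]
    {I : Type*} [Nonempty I] (X V : I → Ω → ℝ)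
    (hXnn : ∀ i, ∀ᵐ ω ∂P, 0 ≤ X i ω) (hVnn : ∀ i, ∀ᵐ ω ∂P, 0 ≤ V i ω)
    (hXint : ∀ i, Integrable (X i) P)
    (π : ℝ → ℝ → ℝ) (hπpos : ∀ ε > (0:ℝ), ∀ l > (0:ℝ), 0 < π ε l)
    -- almost surely: X_i ∈ [ε, l] → V_i ≥ π(ε, l), for all ε, l > 0
    (hπ : ∀ i, ∀ᵐ ω ∂P, ∀ ε > (0:ℝ), ∀ l > (0:ℝ),
        X i ω ∈ Set.Icc ε l → π ε l ≤ V i ω)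
    (K : ℝ) (hKpos : 0 < K) (hK : ∀ i, ∫ ω, X i ω ∂P ≤ K)
    -- uniform integrability of (X_i) with modulus μ
    (μ : ℝ → ℝ) (hμpos : ∀ ε > (0:ℝ), 0 < μ ε)
    (hui : ∀ A : Set Ω, MeasurableSet A → ∀ ε > (0:ℝ), ∀ i,
        P A ≤ ENNReal.ofReal (μ ε) → ∫ ω in A, X i ω ∂P ≤ ε) :
    ∀ i, ∀ ε > (0:ℝ),
      (∫⁻ ω, ENNReal.ofReal (V i ω) ∂P)
          < ENNReal.ofReal (π (ε/4) (K / μ (ε/4)) * (μ (ε/4) / 2)) →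
      ∫ ω, X i ω ∂P < ε :=
  regularity_modulus_from_uniform_integrability_general (mΩ := mΩ) X V hXnn hXint π hπpos hπ K hKpos
    hK μ hμpos hui
end

section
/- Let (Ω,F,P) be a probability space, I a nonempty index set, and (X_i)_{i∈I}, (V_i)_{i∈I} two families of nonnegative real-valued random variables such that for all i ∈ I, almost surely: for all ε, l > 0, if X_i ∈ [ε, l] then V_i ≥ π(ε, l), where π : (0,∞)² → (0,∞). Suppose K > 0 satisfies X_i ≤ K almost surely for all i ∈ I, and each X_i is integrable. Define τ(ε) := π(ε/2, K) · ε/(2K). Then for all i ∈ I and all ε > 0: if E[V_i] < τ(ε) then E[X_i] < ε. -/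
/-!
Split `Ω` at the event `A = {X_i ≥ ε/2}`. On `A` the pointwise modulus gives `V_i ≥ π(ε/2, K)`,
so Markov's inequality turns `E[V_i] < π(ε/2, K)·ε/(2K)` into `P(A) < ε/(2K)`. Since `X_i ≤ K`,
`E[X_i] ≤ ε/2 + K·P(A) < ε`.
-/

open MeasureTheory
open scoped ENNReal

namespace MeasureTheory

variable {Ω : Type*} {mΩ : MeasurableSpace Ω} {μ : Measure Ω}

theorem mul_measure_le_lintegral_of_ae_le {A : Set Ω} (hA : NullMeasurableSet A μ)
    {c : ℝ≥0∞} {g : Ω → ℝ≥0∞} (h : ∀ᵐ ω ∂μ, ω ∈ A → c ≤ g ω) :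
    c * μ A ≤ ∫⁻ ω, g ω ∂μ := by
  rw [← lintegral_indicator_const₀ hA]
  refine lintegral_mono_ae ?_
  filter_upwards [h] with ω hω
  by_cases hωA : ω ∈ A
  · simpa [Set.indicator_of_mem hωA] using hω hωA
  · simp [Set.indicator_of_notMem hωA]

theorem integral_le_add_mul_measureReal_setOf_le [IsProbabilityMeasure μ] {f : Ω → ℝ}
    (hf : Integrable f μ) {t K : ℝ} (ht : 0 ≤ t) (hK : ∀ᵐ ω ∂μ, f ω ≤ K) :
    ∫ ω, f ω ∂μ ≤ t + K * μ.real {ω | t ≤ f ω} := by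
  have hA : NullMeasurableSet {ω | t ≤ f ω} μ :=
    nullMeasurableSet_le aemeasurable_const hf.aemeasurable
  have hbound : ∀ᵐ ω ∂μ, f ω ≤ t + {ω | t ≤ f ω}.indicator (fun _ ↦ K) ω := by
    filter_upwards [hK] with ω hω
    by_cases hωA : t ≤ f ω
    · rw [Set.indicator_of_mem (show ω ∈ {ω | t ≤ f ω} from hωA)]; linarith
    · rw [Set.indicator_of_notMem (show ω ∉ {ω | t ≤ f ω} from hωA)]; linarith
  have hind : Integrable ({ω | t ≤ f ω}.indicator (fun _ ↦ K)) μ :=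
    (integrable_const K).indicator₀ hA
  calc ∫ ω, f ω ∂μ ≤ ∫ ω, (t + {ω | t ≤ f ω}.indicator (fun _ ↦ K) ω) ∂μ :=
        integral_mono_ae hf ((integrable_const t).add hind) hbound
    _ = t + K * μ.real {ω | t ≤ f ω} := by
        rw [integral_add (integrable_const t) hind, integral_indicator₀ hA, setIntegral_const]
        simp [mul_comm]

end MeasureTheory

theorem regularity_modulus_bounded_case_general
    {Ω : Type*} {mΩ : MeasurableSpace Ω} {P : Measure Ω} [IsProbabilityMeasure P]
    {I : Type*} (X V : I → Ω → ℝ)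
    (hXint : ∀ i, Integrable (X i) P)
    (π : ℝ → ℝ → ℝ) (hπpos : ∀ ε > (0:ℝ), ∀ l > (0:ℝ), 0 < π ε l)
    -- almost surely: X_i ∈ [ε, l] → V_i ≥ π(ε, l), for all ε, l > 0
    (hπ : ∀ i, ∀ᵐ ω ∂P, ∀ ε > (0:ℝ), ∀ l > (0:ℝ),
        X i ω ∈ Set.Icc ε l → π ε l ≤ V i ω)
    (K : ℝ) (hKpos : 0 < K)
    -- X_i ≤ K almost surely, for all i
    (hK : ∀ i, ∀ᵐ ω ∂P, X i ω ≤ K) :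
    ∀ i, ∀ ε > (0:ℝ),
      (∫⁻ ω, ENNReal.ofReal (V i ω) ∂P)
          < ENNReal.ofReal (π (ε/2) K * (ε / (2*K))) →
      ∫ ω, X i ω ∂P < ε := by
  intro i ε hε hV
  set A := {ω | ε / 2 ≤ X i ω}
  have hc : 0 < π (ε / 2) K := hπpos _ (by positivity) _ hKpos
  have hmarkov : ENNReal.ofReal (π (ε / 2) K) * P A ≤ ∫⁻ ω, ENNReal.ofReal (V i ω) ∂P := by
    refine mul_measure_le_lintegral_of_ae_le
      (nullMeasurableSet_le aemeasurable_const (hXint i).aemeasurable) ?_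
    filter_upwards [hπ i, hK i] with ω hπω hKω hωA
    exact ENNReal.ofReal_le_ofReal (hπω _ (by positivity) _ hKpos ⟨hωA, hKω⟩)
  have hPA : P.real A < ε / (2 * K) := by
    rw [ENNReal.ofReal_mul hc.le] at hV
    exact ENNReal.toReal_lt_of_lt_ofReal
      (lt_of_mul_lt_mul_left (hmarkov.trans_lt hV) (by positivity))
  calc ∫ ω, X i ω ∂P ≤ ε / 2 + K * P.real A :=
        integral_le_add_mul_measureReal_setOf_le (hXint i) (by positivity) (hK i)
    _ < ε / 2 + K * (ε / (2 * K)) := by gcongr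
    _ = ε := by field_simp; ring

/-- Regularity modulus in expectation from a pointwise modulus `π` when the family `(X_i)` is
almost surely bounded by `K`: with `τ(ε) := π(ε/2, K)·ε/(2K)`, `E[V_i] < τ(ε)` implies
`E[X_i] < ε`. (The expectation `E[V_i]` is taken as the possibly infinite Lebesgue integral.) -/
theorem regularity_modulus_bounded_case
    {Ω : Type*} {mΩ : MeasurableSpace Ω} {P : Measure Ω} [IsProbabilityMeasure P]
    {I : Type*} [Nonempty I] (X V : I → Ω → ℝ)
    (hXnn : ∀ i, ∀ᵐ ω ∂P, 0 ≤ X i ω) (hVnn : ∀ i, ∀ᵐ ω ∂P, 0 ≤ V i ω)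
    (hXint : ∀ i, Integrable (X i) P)
    (π : ℝ → ℝ → ℝ) (hπpos : ∀ ε > (0:ℝ), ∀ l > (0:ℝ), 0 < π ε l)
    -- almost surely: X_i ∈ [ε, l] → V_i ≥ π(ε, l), for all ε, l > 0
    (hπ : ∀ i, ∀ᵐ ω ∂P, ∀ ε > (0:ℝ), ∀ l > (0:ℝ),
        X i ω ∈ Set.Icc ε l → π ε l ≤ V i ω)
    (K : ℝ) (hKpos : 0 < K)
    -- X_i ≤ K almost surely, for all i
    (hK : ∀ i, ∀ᵐ ω ∂P, X i ω ≤ K) :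
    ∀ i, ∀ ε > (0:ℝ),
      (∫⁻ ω, ENNReal.ofReal (V i ω) ∂P)
          < ENNReal.ofReal (π (ε/2) K * (ε / (2*K))) →
      ∫ ω, X i ω ∂P < ε :=
  regularity_modulus_bounded_case_general (mΩ := mΩ) X V hXint π hπpos hπ K hKpos hK
end

section
/- Let (x_n), (α_n), (β_n), (γ_n) be sequences of nonnegative real numbers with x_{n+1} ≤ (1+α_n)·x_n − β_n + γ_n for all n ∈ ℕ. If ∏_{i=0}^∞ (1+α_i) < ∞ and Σ_{i=0}^∞ γ_i < ∞, then (x_n) converges and Σ_{i=0}^∞ β_i < ∞. Moreover, if K, L, M > 0 satisfy x_0 < K, ∏_{i=0}^∞ (1+α_i) < L and Σ_{i=0}^∞ γ_i < M, then Σ_{i=0}^∞ β_i < L·(K + M). -/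
/-!
Dividing the recursion by `P n = ∏_{i<n} (1 + α_i)` turns it into the additive inequality
`y_{n+1} ≤ y_n - b_n + g_n` for `y_n = x_n / P_n`, `b_n = β_n / P_{n+1}`, `g_n = γ_n / P_{n+1}`.
There `y_n - ∑_{i<n} g_i` is antitone and bounded below, so `y` converges, and telescoping gives
`∑ b ≤ y_0 + ∑ g`. Since `1 ≤ P_n ≤ l := lim P`, multiplying back gives convergence of `x = y P`
and `∑ β ≤ l ∑ b ≤ l (x_0 + ∑ γ)`.
-/

open Filter Topology Finset

section Additive

variable {y b g : ℕ → ℝ}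

theorem add_sum_range_le_of_le_sub_add (h : ∀ n, y (n + 1) ≤ y n - b n + g n) (n : ℕ) :
    y n + ∑ i ∈ range n, b i ≤ y 0 + ∑ i ∈ range n, g i := by
  induction n with
  | zero => simp
  | succ n ih =>
    rw [sum_range_succ, sum_range_succ]
    linarith [h n]

theorem tendsto_of_le_add_of_summable (hy : BddBelow (Set.range y)) (hg : Summable g)
    (h : ∀ n, y (n + 1) ≤ y n + g n) : ∃ l, Tendsto y atTop (𝓝 l) := by
  have hG := hg.hasSum.tendsto_sum_nat
  set w : ℕ → ℝ := fun n ↦ y n - ∑ i ∈ range n, g i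
  have hw_anti : Antitone w := antitone_nat_of_succ_le fun n ↦ by
    simp only [w, sum_range_succ]
    linarith [h n]
  have hw_bdd : BddBelow (Set.range w) := by
    obtain ⟨c, hc⟩ := hy
    obtain ⟨C, hC⟩ := hG.bddAbove_range
    refine ⟨c - C, ?_⟩
    rintro _ ⟨n, rfl⟩
    linarith [hc ⟨n, rfl⟩, hC ⟨n, rfl⟩]
  refine ⟨_, ((tendsto_atTop_ciInf hw_anti hw_bdd).add hG).congr fun n ↦ ?_⟩
  simp only [w, sub_add_cancel]

theorem summable_and_tsum_le_of_le_sub_add (hy : ∀ n, 0 ≤ y n) (hb : ∀ n, 0 ≤ b n)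
    (hg : ∀ n, 0 ≤ g n) (hgs : Summable g) (h : ∀ n, y (n + 1) ≤ y n - b n + g n) :
    Summable b ∧ ∑' i, b i ≤ y 0 + ∑' i, g i := by
  have hpartial : ∀ n, ∑ i ∈ range n, b i ≤ y 0 + ∑' i, g i := fun n ↦ by
    linarith [add_sum_range_le_of_le_sub_add h n, hy n,
      hgs.sum_le_tsum (range n) fun i _ ↦ hg i]
  have hbs := summable_of_sum_range_le hb hpartial
  exact ⟨hbs, hbs.tsum_le_of_sum_range_le hpartial⟩

end Additive

section Product

variable {α : ℕ → ℝ}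

theorem one_le_prod_range_one_add (hα : ∀ n, 0 ≤ α n) (n : ℕ) : 1 ≤ ∏ i ∈ range n, (1 + α i) :=
  one_le_prod fun i _ ↦ le_add_of_nonneg_right (hα i)

theorem monotone_prod_range_one_add (hα : ∀ n, 0 ≤ α n) :
    Monotone fun n ↦ ∏ i ∈ range n, (1 + α i) :=
  monotone_nat_of_le_succ fun n ↦ by
    rw [prod_range_succ]
    exact le_mul_of_one_le_right (zero_le_one.trans (one_le_prod_range_one_add hα n))
      (le_add_of_nonneg_right (hα n))

theorem prod_range_one_add_le_of_tendsto (hα : ∀ n, 0 ≤ α n) {l : ℝ}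
    (hl : Tendsto (fun n ↦ ∏ i ∈ range n, (1 + α i)) atTop (𝓝 l)) (n : ℕ) :
    ∏ i ∈ range n, (1 + α i) ≤ l :=
  (monotone_prod_range_one_add hα).ge_of_tendsto hl n

end Product

section Qihou

variable {x α β γ : ℕ → ℝ}

theorem div_prod_range_one_add_le_sub_add (hα : ∀ n, 0 ≤ α n)
    (hrec : ∀ n, x (n + 1) ≤ (1 + α n) * x n - β n + γ n) (n : ℕ) :
    x (n + 1) / ∏ i ∈ range (n + 1), (1 + α i) ≤
      x n / ∏ i ∈ range n, (1 + α i) - β n / ∏ i ∈ range (n + 1), (1 + α i) +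
        γ n / ∏ i ∈ range (n + 1), (1 + α i) := by
  have hP := zero_lt_one.trans_le (one_le_prod_range_one_add hα n)
  have h1α : 0 < 1 + α n := by linarith [hα n]
  rw [prod_range_succ]
  calc _ ≤ ((1 + α n) * x n - β n + γ n) / ((∏ i ∈ range n, (1 + α i)) * (1 + α n)) := by
        gcongr
        exact hrec n
    _ = _ := by field_simp

theorem summable_div_prod_range_one_add (hα : ∀ n, 0 ≤ α n) (hγ : ∀ n, 0 ≤ γ n)
    (hγs : Summable γ) : Summable fun n ↦ γ n / ∏ i ∈ range (n + 1), (1 + α i) :=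
  hγs.of_nonneg_of_le
    (fun n ↦ div_nonneg (hγ n) (zero_le_one.trans (one_le_prod_range_one_add hα _)))
    fun n ↦ div_le_self (hγ n) (one_le_prod_range_one_add hα _)

theorem exists_tendsto_of_le_one_add_mul_sub_add (hx : ∀ n, 0 ≤ x n) (hα : ∀ n, 0 ≤ α n)
    (hβ : ∀ n, 0 ≤ β n) (hγ : ∀ n, 0 ≤ γ n)
    (hrec : ∀ n, x (n + 1) ≤ (1 + α n) * x n - β n + γ n) (hγs : Summable γ) {l : ℝ}
    (hl : Tendsto (fun n ↦ ∏ i ∈ range n, (1 + α i)) atTop (𝓝 l)) :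
    ∃ c, Tendsto x atTop (𝓝 c) := by
  have hP (n : ℕ) : 0 < ∏ i ∈ range n, (1 + α i) :=
    zero_lt_one.trans_le (one_le_prod_range_one_add hα n)
  obtain ⟨c, hc⟩ := tendsto_of_le_add_of_summable (y := fun n ↦ x n / ∏ i ∈ range n, (1 + α i))
    ⟨0, by rintro _ ⟨n, rfl⟩; exact div_nonneg (hx n) (hP n).le⟩
    (summable_div_prod_range_one_add hα hγ hγs) fun n ↦ by
      linarith [div_prod_range_one_add_le_sub_add hα hrec n, div_nonneg (hβ n) (hP (n + 1)).le]
  exact ⟨c * l, (hc.mul hl).congr fun n ↦ div_mul_cancel₀ _ (hP n).ne'⟩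

theorem summable_and_tsum_le_of_le_one_add_mul_sub_add (hx : ∀ n, 0 ≤ x n)
    (hα : ∀ n, 0 ≤ α n) (hβ : ∀ n, 0 ≤ β n) (hγ : ∀ n, 0 ≤ γ n)
    (hrec : ∀ n, x (n + 1) ≤ (1 + α n) * x n - β n + γ n) (hγs : Summable γ) {l : ℝ}
    (hl : Tendsto (fun n ↦ ∏ i ∈ range n, (1 + α i)) atTop (𝓝 l)) :
    Summable β ∧ ∑' i, β i ≤ l * (x 0 + ∑' i, γ i) := by
  have hP (n : ℕ) : 0 < ∏ i ∈ range n, (1 + α i) :=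
    zero_lt_one.trans_le (one_le_prod_range_one_add hα n)
  have hPl := prod_range_one_add_le_of_tendsto hα hl
  have hgs := summable_div_prod_range_one_add hα hγ hγs
  obtain ⟨hbs, hb_le⟩ := summable_and_tsum_le_of_le_sub_add
    (fun n ↦ div_nonneg (hx n) (hP n).le) (fun n ↦ div_nonneg (hβ n) (hP (n + 1)).le)
    (fun n ↦ div_nonneg (hγ n) (hP (n + 1)).le) hgs (div_prod_range_one_add_le_sub_add hα hrec)
  have hβ_le (n : ℕ) : β n ≤ l * (β n / ∏ i ∈ range (n + 1), (1 + α i)) := by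
    rw [mul_div_assoc', le_div_iff₀ (hP (n + 1)), mul_comm l]
    exact mul_le_mul_of_nonneg_left (hPl (n + 1)) (hβ n)
  have hg_le : ∑' n, γ n / ∏ i ∈ range (n + 1), (1 + α i) ≤ ∑' n, γ n :=
    hgs.tsum_le_tsum (fun n ↦ div_le_self (hγ n) (one_le_prod_range_one_add hα _)) hγs
  have hβs : Summable β := (hbs.mul_left l).of_nonneg_of_le hβ hβ_le
  refine ⟨hβs, ?_⟩
  calc ∑' n, β n ≤ ∑' n, l * (β n / ∏ i ∈ range (n + 1), (1 + α i)) :=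
        hβs.tsum_le_tsum hβ_le (hbs.mul_left l)
    _ = l * ∑' n, β n / ∏ i ∈ range (n + 1), (1 + α i) := tsum_mul_left
    _ ≤ l * (x 0 + ∑' n, γ n) := by
        gcongr
        · exact (hP 0).le.trans (hPl 0)
        · simpa using hb_le.trans (add_le_add_right hg_le _)

end Qihou

/-- Quantitative version of Qihou's lemma (non-stochastic analogue of the Robbins-Siegmund
theorem): if `x_{n+1} ≤ (1+α_n)x_n − β_n + γ_n` with `∏(1+α_i) < ∞` and `Σγ_i < ∞`, then `(x_n)`
converges and `Σβ_i < ∞`; moreover, if `x_0 < K`, `∏(1+α_i) < L` and `Σγ_i < M`, then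
`Σβ_i < L(K+M)`. -/
theorem qihou_lemma_quantitative
    (x α β γ : ℕ → ℝ)
    (hx : ∀ n, 0 ≤ x n) (hα : ∀ n, 0 ≤ α n) (hβ : ∀ n, 0 ≤ β n) (hγ : ∀ n, 0 ≤ γ n)
    (hrec : ∀ n, x (n+1) ≤ (1 + α n) * x n - β n + γ n)
    (hprod : ∃ l : ℝ, Tendsto (fun n => ∏ i ∈ Finset.range n, (1 + α i)) atTop (𝓝 l))
    (hγsum : Summable γ) :
    (∃ l : ℝ, Tendsto x atTop (𝓝 l)) ∧ Summable β ∧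
    (∀ K L M : ℝ, 0 < K → 0 < L → 0 < M → x 0 < K →
      (∃ l : ℝ, l < L ∧ Tendsto (fun n => ∏ i ∈ Finset.range n, (1 + α i)) atTop (𝓝 l)) →
      (∑' i, γ i) < M →
      (∑' i, β i) < L * (K + M)) := by
  obtain ⟨l, hl⟩ := hprod
  obtain ⟨hβs, hβ_le⟩ :=
    summable_and_tsum_le_of_le_one_add_mul_sub_add hx hα hβ hγ hrec hγsum hl
  refine ⟨exists_tendsto_of_le_one_add_mul_sub_add hx hα hβ hγ hrec hγsum hl, hβs, ?_⟩
  rintro K L M - - - hxK ⟨l', hl'L, hl'⟩ hγM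
  obtain rfl := tendsto_nhds_unique hl hl'
  have hl_pos : 0 < l :=
    zero_lt_one.trans_le <|
      (one_le_prod_range_one_add hα 0).trans (prod_range_one_add_le_of_tendsto hα hl 0)
  calc ∑' i, β i ≤ l * (x 0 + ∑' i, γ i) := hβ_le
    _ < l * (K + M) := by gcongr
    _ < L * (K + M) := by
        have : 0 ≤ ∑' i, γ i := tsum_nonneg hγ
        gcongr
        linarith [hx 0]
end

section
/- Let (Ω,F,P) be a probability space with a filtration (F_n), let (X_n), (V_n), (C_n) be sequences of nonnegative integrable real-valued random variables adapted to (F_n), and let (a_n), (u_n) be sequences of nonnegative reals. Suppose E[X_{n+1} | F_n] ≤ (1+a_n)·X_n − u_n·V_n + C_n almost surely for all n ∈ ℕ. Suppose there exist K, L, M > 0 with E[X_0] < L, ∏_{i=0}^∞ (1+a_i) < K and Σ_{i=0}^∞ E[C_i] < M, and functions χ : (0,∞) → ℕ and θ : ℕ × (0,∞) → ℕ such that Σ_{i=k}^{θ(k,b)} u_i ≥ b for all b > 0 and k ∈ ℕ, and Σ_{i=χ(ε)}^∞ E[C_i] < ε for all ε > 0. Finally, suppose τ : (0,∞) → (0,∞)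 satisfies: for all ε > 0 and all n ∈ ℕ, E[V_n] < τ(ε) implies E[f(X_n)] < ε, where f : [0,∞) → [0,∞) is s.i.c.c. with moduli ψ and κ. Then: (a) E[f(X_n)] < ε for all n ≥ ρ(ε) := θ(χ(κ(ε')), K·(L+M)/τ(ε')) where ε' := ε·ψ(K⁻¹)/2; and (b) for all λ, ε > 0, P(∃ n ≥ ρ'(λ,ε), X_n ≥ ε) < λ, where ρ'(λ,ε) := ρ(λ·f(ε)). -/
/-!
Let `p n = ∏_{i<n} (1 + a i) ≤ K` and `T n = ∑_{i ≥ n} C i / p (i + 1)`. Dividing the recursion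
by `p (n + 1)` shows that `U n = X n / p n + E[T n | F n]` is a nonnegative supermartingale, and
so is `f (U n)` by conditional Jensen, `f` being concave and nondecreasing. As `X n ≤ K U n`,
ψ-supermultiplicativity gives `ψ K⁻¹ f (X n) ≤ f (U n)`.

Summing the expected recursion gives `∑ u i E[V i] ≤ K (L + M)`, so some
`n₀ ∈ [χ (κ δ), θ (χ (κ δ)) (K (L + M) / τ δ)]` has `E[V n₀] < τ δ`. There subadditivity of `f`
and Jensen give `E[f (U n₀)] ≤ E[f (X n₀)] + f (E[T n₀]) < δ + δ`. Since `E[f (U n)]` is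
nonincreasing this yields the rate in mean, and the maximal inequality for the nonnegative
supermartingale `f (U n)` yields the almost sure rate.
-/

open MeasureTheory Filter Topology
open scoped ENNReal

structure SICC (f ψ κ : ℝ → ℝ) : Prop where
  supermult : ∀ x ≥ (0:ℝ), ∀ a ∈ Set.Icc (0:ℝ) 1, f x * ψ a ≤ f (x * a)
  psi_mem : ∀ a ∈ Set.Icc (0:ℝ) 1, ψ a ∈ Set.Icc (0:ℝ) 1
  psi_pos : ∀ a ∈ Set.Ioc (0:ℝ) 1, 0 < ψ a
  nonneg : ∀ x ≥ (0:ℝ), 0 ≤ f x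
  strictMonoOn : StrictMonoOn f (Set.Ici 0)
  concaveOn : ConcaveOn ℝ (Set.Ici 0) f
  continuousOn : ContinuousOn f (Set.Ici 0)
  map_zero : f 0 = 0
  kappa_pos : ∀ ε > (0:ℝ), 0 < κ ε
  kappa_mod : ∀ x ≥ (0:ℝ), ∀ ε > (0:ℝ), x < κ ε → f x < ε

namespace ConcaveOn

variable {f : ℝ → ℝ}

lemma mul_le_map_mul (hf : ConcaveOn ℝ (Set.Ici 0) f) (h0 : 0 ≤ f 0) {t x : ℝ}
    (ht₀ : 0 ≤ t) (ht₁ : t ≤ 1) (hx : 0 ≤ x) : t * f x ≤ f (t * x) := by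
  have h := hf.2 (Set.mem_Ici.2 hx) Set.self_mem_Ici ht₀ (sub_nonneg.2 ht₁) (by ring)
  simp only [smul_eq_mul, mul_zero, add_zero] at h
  nlinarith

lemma map_add_le (hf : ConcaveOn ℝ (Set.Ici 0) f) (h0 : 0 ≤ f 0) {x y : ℝ}
    (hx : 0 ≤ x) (hy : 0 ≤ y) : f (x + y) ≤ f x + f y := by
  rcases (add_nonneg hx hy).eq_or_lt with hxy | hxy
  · obtain rfl : x = 0 := by linarith
    obtain rfl : y = 0 := by linarith
    simpa using h0
  have hx' := hf.mul_le_map_mul h0 (div_nonneg hx hxy.le)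
    (div_le_one_of_le₀ (by linarith) hxy.le) hxy.le
  have hy' := hf.mul_le_map_mul h0 (div_nonneg hy hxy.le)
    (div_le_one_of_le₀ (by linarith) hxy.le) hxy.le
  rw [div_mul_cancel₀ _ hxy.ne'] at hx' hy'
  calc f (x + y) = x / (x + y) * f (x + y) + y / (x + y) * f (x + y) := by
        field_simp
    _ ≤ f x + f y := add_le_add hx' hy'

lemma map_le_mul_one_add (hf : ConcaveOn ℝ (Set.Ici 0) f) (h0 : 0 ≤ f 0)
    (hmono : MonotoneOn f (Set.Ici 0)) {x : ℝ} (hx : 0 ≤ x) : f x ≤ f 1 * (1 + x) := by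
  have hf1 : 0 ≤ f 1 := h0.trans (hmono Set.self_mem_Ici (Set.mem_Ici.2 zero_le_one) zero_le_one)
  rcases le_total x 1 with h | h
  · calc f x ≤ f 1 := hmono hx (Set.mem_Ici.2 zero_le_one) h
      _ ≤ f 1 * (1 + x) := le_mul_of_one_le_right hf1 (by linarith)
  · have h' := hf.mul_le_map_mul h0 (inv_nonneg.2 hx) (inv_le_one_of_one_le₀ h) hx
    rw [inv_mul_cancel₀ (by positivity), inv_mul_le_iff₀ (by positivity)] at h'
    nlinarith

lemma integrable_comp {Ω : Type*} {m : MeasurableSpace Ω} {μ : Measure Ω} [IsFiniteMeasure μ]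
    (hf : ConcaveOn ℝ (Set.Ici 0) f) (h0 : 0 ≤ f 0) (hmono : MonotoneOn f (Set.Ici 0))
    (hcont : ContinuousOn f (Set.Ici 0)) {Y : Ω → ℝ} (hY : Integrable Y μ) (hY0 : 0 ≤ᵐ[μ] Y) :
    Integrable (fun ω => f (Y ω)) μ := by
  have hmeas : AEStronglyMeasurable (fun ω => f (max (Y ω) 0)) μ :=
    (hcont.comp_continuous (continuous_id.max continuous_const)
      fun x => le_max_right x 0).comp_aestronglyMeasurable hY.1
  refine Integrable.mono' ((hY.const_mul (f 1)).add (integrable_const (f 1)))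
    (hmeas.congr ?_) ?_
  all_goals filter_upwards [hY0] with ω (hω : 0 ≤ Y ω)
  · rw [max_eq_left hω]
  · rw [Real.norm_of_nonneg (h0.trans (hmono Set.self_mem_Ici hω hω))]
    show f (Y ω) ≤ f 1 * Y ω + f 1
    linarith [hf.map_le_mul_one_add h0 hmono hω]

end ConcaveOn

lemma SICC.mul_psi_inv_le {f ψ κ : ℝ → ℝ} (hf : SICC f ψ κ) {K x y : ℝ} (hK : 1 ≤ K)
    (hx : 0 ≤ x) (hxy : x ≤ K * y) : f x * ψ K⁻¹ ≤ f y := by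
  have hK₀ : 0 < K := zero_lt_one.trans_le hK
  have hKy : 0 ≤ K * y := hx.trans hxy
  have hK₁ : K⁻¹ ∈ Set.Icc (0 : ℝ) 1 := ⟨inv_nonneg.2 hK₀.le, inv_le_one_of_one_le₀ hK⟩
  calc f x * ψ K⁻¹ ≤ f (K * y) * ψ K⁻¹ :=
        mul_le_mul_of_nonneg_right (hf.strictMonoOn.monotoneOn hx hKy hxy) (hf.psi_mem _ hK₁).1
    _ ≤ f (K * y * K⁻¹) := hf.supermult _ hKy _ hK₁
    _ = f y := by rw [mul_comm K, mul_assoc, mul_inv_cancel₀ hK₀.ne', mul_one]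

namespace MeasureTheory.Supermartingale

variable {Ω : Type*} {m : MeasurableSpace Ω} {μ : Measure Ω} [IsFiniteMeasure μ]
  {ℱ : Filtration ℕ m}

theorem comp_concaveOn {W : ℕ → Ω → ℝ} (hW : Supermartingale W ℱ μ) (hW0 : ∀ n, 0 ≤ᵐ[μ] W n)
    {f : ℝ → ℝ} (hf : ConcaveOn ℝ (Set.Ici 0) f) (h0 : 0 ≤ f 0)
    (hmono : MonotoneOn f (Set.Ici 0)) (hcont : ContinuousOn f (Set.Ici 0)) :
    Supermartingale (fun n ω => f (max (W n ω) 0)) ℱ μ := by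
  have hfc : Continuous fun x => f (max x 0) :=
    hcont.comp_continuous (continuous_id.max continuous_const) fun x => le_max_right x 0
  have hint : ∀ n, Integrable (W n ⊔ 0) μ := fun n => (hW.integrable n).sup (integrable_zero _ _ _)
  refine supermartingale_nat (fun n => hfc.comp_stronglyMeasurable (hW.stronglyAdapted n))
    (fun n => hf.integrable_comp h0 hmono hcont (hint n) (ae_of_all _ fun ω => le_max_right _ _))
    fun n => ?_
  have hjensen := hf.condExp_map_le (m := ℱ n) (ℱ.le n) hcont.upperSemicontinuousOn
    (ae_of_all _ fun ω => le_max_right (W (n + 1) ω) 0) isClosed_Ici (hint (n + 1))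
    (hf.integrable_comp h0 hmono hcont (hint (n + 1)) (ae_of_all _ fun ω => le_max_right _ _))
  have hpos : μ[W (n + 1) ⊔ 0 | ℱ n] =ᵐ[μ] μ[W (n + 1) | ℱ n] :=
    condExp_congr_ae (by filter_upwards [hW0 (n + 1)] with ω hω using max_eq_left hω)
  filter_upwards [hjensen, hpos, hW.2.1 n (n + 1) n.le_succ, hW0 n,
    condExp_nonneg (m := ℱ n) (hW0 (n + 1))] with ω hj hp hs (hn : 0 ≤ W n ω) (hc : 0 ≤ _)
  simp only [Function.comp_apply] at hj
  rw [max_eq_left hn]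
  exact hj.trans (hp ▸ hmono hc hn hs)

theorem mul_measureReal_exists_ge_le {g : ℕ → Ω → ℝ} (hg : Supermartingale g ℱ μ) (hg0 : 0 ≤ g)
    (c : ℝ) {n₀ N : ℕ} (hN : n₀ ≤ N) :
    c * μ.real {ω | ∃ n ∈ Set.Icc n₀ N, c ≤ g n ω} ≤ ∫ ω, g n₀ ω ∂μ := by
  set σ : Ω → ℕ∞ := fun ω => (hittingBtwn g (Set.Ici c) n₀ N ω : ℕ)
  have hσ : IsStoppingTime ℱ σ :=
    hg.stronglyAdapted.adapted.isStoppingTime_hittingBtwn measurableSet_Ici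
  have hσN : ∀ ω, σ ω ≤ N := fun ω => WithTop.coe_le_coe.2 (hittingBtwn_le ω)
  have hint : Integrable (stoppedValue g σ) μ := integrable_stoppedValue ℕ hσ hg.integrable hσN
  have hmeas : MeasurableSet {ω | ∃ n ∈ Set.Icc n₀ N, c ≤ g n ω} := by
    have h : {ω | ∃ n ∈ Set.Icc n₀ N, c ≤ g n ω} = ⋃ n ∈ Set.Icc n₀ N, {ω | c ≤ g n ω} := by
      ext; simp
    rw [h]
    exact MeasurableSet.biUnion (Set.to_countable _) fun n _ =>
      measurableSet_le measurable_const ((hg.stronglyMeasurable n).measurable.mono (ℱ.le n) le_rfl)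
  have hstop : ∫ ω, stoppedValue g σ ω ∂μ ≤ ∫ ω, g n₀ ω ∂μ := by
    have h := hg.neg.expected_stoppedValue_mono (isStoppingTime_const ℱ n₀) hσ
      (fun ω => WithTop.coe_le_coe.2 (le_hittingBtwn hN ω)) hσN
    have hneg : stoppedValue (-g) σ = -stoppedValue g σ := rfl
    rw [stoppedValue_const, hneg] at h
    simpa only [Pi.neg_apply, integral_neg, neg_le_neg_iff] using h
  calc c * μ.real {ω | ∃ n ∈ Set.Icc n₀ N, c ≤ g n ω}
      ≤ ∫ ω in {ω | ∃ n ∈ Set.Icc n₀ N, c ≤ g n ω}, stoppedValue g σ ω ∂μ :=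
        setIntegral_ge_of_const_le_real hmeas (measure_ne_top _ _)
          (fun ω hω => stoppedValue_hittingBtwn_mem hω) hint.integrableOn
    _ ≤ ∫ ω, stoppedValue g σ ω ∂μ := setIntegral_le_integral hint (ae_of_all _ fun ω => hg0 _ ω)
    _ ≤ ∫ ω, g n₀ ω ∂μ := hstop

theorem measure_exists_ge_le {g : ℕ → Ω → ℝ} (hg : Supermartingale g ℱ μ) (hg0 : 0 ≤ g)
    {c : ℝ} (hc : 0 < c) (n₀ : ℕ) :
    μ {ω | ∃ n, n₀ ≤ n ∧ c ≤ g n ω} ≤ ENNReal.ofReal ((∫ ω, g n₀ ω ∂μ) / c) := by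
  have hunion : {ω | ∃ n, n₀ ≤ n ∧ c ≤ g n ω} =
      ⋃ N, {ω | ∃ n ∈ Set.Icc n₀ (n₀ + N), c ≤ g n ω} := by
    ext ω
    simp only [Set.mem_ofPred_eq, Set.mem_iUnion, Set.mem_Icc]
    exact ⟨fun ⟨n, hn, h⟩ => ⟨n - n₀, n, ⟨hn, by omega⟩, h⟩,
      fun ⟨_, n, hn, h⟩ => ⟨n, hn.1, h⟩⟩
  have hmono : Monotone fun N => {ω | ∃ n ∈ Set.Icc n₀ (n₀ + N), c ≤ g n ω} :=
    fun i j hij ω ⟨n, hn, h⟩ => ⟨n, ⟨hn.1, hn.2.trans (by omega)⟩, h⟩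
  rw [hunion, hmono.measure_iUnion]
  refine iSup_le fun N => ?_
  rw [← ofReal_measureReal (measure_ne_top _ _)]
  exact ENNReal.ofReal_le_ofReal
    ((le_div_iff₀' hc).2 (hg.mul_measureReal_exists_ge_le hg0 c (Nat.le_add_right n₀ N)))

end MeasureTheory.Supermartingale

lemma Finset.exists_mem_Icc_lt_of_sum_mul_lt {u v : ℕ → ℝ} {k n : ℕ} {b τ : ℝ}
    (hu : ∀ i, 0 ≤ u i) (hv : ∀ i, 0 ≤ v i) (hτ : 0 ≤ τ)
    (hb : b ≤ ∑ i ∈ Finset.Icc k n, u i) (hsum : ∑ i ∈ Finset.range (n + 1), u i * v i < τ * b) :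
    ∃ i ∈ Finset.Icc k n, v i < τ := by
  by_contra! h
  have hIcc : τ * b ≤ ∑ i ∈ Finset.Icc k n, u i * v i :=
    calc τ * b ≤ τ * ∑ i ∈ Finset.Icc k n, u i := mul_le_mul_of_nonneg_left hb hτ
      _ = ∑ i ∈ Finset.Icc k n, τ * u i := Finset.mul_sum ..
      _ ≤ ∑ i ∈ Finset.Icc k n, u i * v i :=
        Finset.sum_le_sum fun i hi => by nlinarith [h i hi, hu i]
  have hsub : ∑ i ∈ Finset.Icc k n, u i * v i ≤ ∑ i ∈ Finset.range (n + 1), u i * v i :=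
    Finset.sum_le_sum_of_subset_of_nonneg
      (fun i hi => by simp only [Finset.mem_Icc, Finset.mem_range] at hi ⊢; omega)
      fun i _ _ => mul_nonneg (hu i) (hv i)
  linarith

lemma tsum_nat_add_le_of_le {c : ℕ → ℝ} (hc : ∀ n, 0 ≤ c n) (hcs : Summable c) {k n : ℕ}
    (h : k ≤ n) : ∑' i, c (n + i) ≤ ∑' i, c (k + i) := by
  obtain ⟨j, rfl⟩ := Nat.exists_eq_add_of_le h
  have hk : Summable fun i => c (k + i) := by
    simpa only [add_comm k] using (summable_nat_add_iff k).2 hcs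
  rw [← hk.sum_add_tsum_nat_add j]
  simp only [show ∀ i, k + j + i = k + (i + j) by omega]
  exact le_add_of_nonneg_left (Finset.sum_nonneg fun i _ => hc _)

namespace RobbinsSiegmund

def weight (a : ℕ → ℝ) (n : ℕ) : ℝ := ∏ i ∈ Finset.range n, (1 + a i)

variable {a : ℕ → ℝ}

lemma weight_succ (n : ℕ) : weight a (n + 1) = weight a n * (1 + a n) :=
  Finset.prod_range_succ _ n

lemma one_le_weight (ha : ∀ n, 0 ≤ a n) (n : ℕ) : 1 ≤ weight a n :=
  Finset.one_le_prod fun i _ => le_add_of_nonneg_right (ha i)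

lemma weight_pos (ha : ∀ n, 0 ≤ a n) (n : ℕ) : 0 < weight a n :=
  zero_lt_one.trans_le (one_le_weight ha n)

lemma monotone_weight (ha : ∀ n, 0 ≤ a n) : Monotone (weight a) :=
  monotone_nat_of_le_succ fun n => by
    rw [weight_succ]
    exact le_mul_of_one_le_right (weight_pos ha n).le (le_add_of_nonneg_right (ha n))

lemma weight_le_of_tendsto (ha : ∀ n, 0 ≤ a n) {l : ℝ} (hl : Tendsto (weight a) atTop (𝓝 l))
    (n : ℕ) : weight a n ≤ l :=
  (monotone_weight ha).ge_of_tendsto hl n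

lemma one_add_mul_add_div_weight_succ (ha : ∀ n, 0 ≤ a n) (n : ℕ) (x c : ℝ) :
    ((1 + a n) * x + c) / weight a (n + 1) = x / weight a n + c / weight a (n + 1) := by
  have := weight_pos ha n
  have : 0 < 1 + a n := by linarith [ha n]
  rw [weight_succ]
  field_simp

lemma div_weight_add_sum_le {x u v c : ℕ → ℝ} (ha : ∀ n, 0 ≤ a n)
    (hrec : ∀ n, x (n + 1) ≤ (1 + a n) * x n - u n * v n + c n) (N : ℕ) :
    x N / weight a N + ∑ i ∈ Finset.range N, u i * v i / weight a (i + 1) ≤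
      x 0 + ∑ i ∈ Finset.range N, c i / weight a (i + 1) := by
  induction N with
  | zero => simp [weight]
  | succ n ih =>
    have hstep : (x (n + 1) + u n * v n) / weight a (n + 1) ≤
        ((1 + a n) * x n + c n) / weight a (n + 1) :=
      div_le_div_of_nonneg_right (by linarith [hrec n]) (weight_pos ha _).le
    rw [add_div, one_add_mul_add_div_weight_succ ha] at hstep
    rw [Finset.sum_range_succ, Finset.sum_range_succ]
    linarith

lemma sum_mul_le {x u v c : ℕ → ℝ} {K : ℝ} (ha : ∀ n, 0 ≤ a n) (hK : ∀ n, weight a n ≤ K)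
    (hx : ∀ n, 0 ≤ x n) (huv : ∀ n, 0 ≤ u n * v n) (hc : ∀ n, 0 ≤ c n) (hcs : Summable c)
    (hrec : ∀ n, x (n + 1) ≤ (1 + a n) * x n - u n * v n + c n) (N : ℕ) :
    ∑ i ∈ Finset.range N, u i * v i ≤ K * (x 0 + ∑' i, c i) := by
  have hKnn : 0 ≤ K := zero_le_one.trans ((one_le_weight ha 0).trans (hK 0))
  have hc' : ∑ i ∈ Finset.range N, c i / weight a (i + 1) ≤ ∑' i, c i :=
    (Finset.sum_le_sum fun i _ => div_le_self (hc i) (one_le_weight ha _)).trans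
      (hcs.sum_le_tsum _ fun i _ => hc i)
  have hxN : 0 ≤ x N / weight a N := div_nonneg (hx N) (weight_pos ha N).le
  calc ∑ i ∈ Finset.range N, u i * v i
      ≤ ∑ i ∈ Finset.range N, K * (u i * v i / weight a (i + 1)) :=
        Finset.sum_le_sum fun i _ => by
          rw [mul_div_assoc', le_div_iff₀ (weight_pos ha _)]
          exact (mul_le_mul_of_nonneg_left (hK _) (huv i)).trans_eq (mul_comm _ _)
    _ = K * ∑ i ∈ Finset.range N, u i * v i / weight a (i + 1) := (Finset.mul_sum ..).symm
    _ ≤ K * (x 0 + ∑' i, c i) := by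
        gcongr
        linarith [div_weight_add_sum_le ha hrec N]

variable {Ω : Type*} {m : MeasurableSpace Ω} {P : Measure Ω} {ℱ : Filtration ℕ m}
  {X V C : ℕ → Ω → ℝ} {u : ℕ → ℝ}

/-- Summed in `ℝ≥0∞`, where every series converges; negative terms count as `0`. -/
noncomputable def tail (a : ℕ → ℝ) (C : ℕ → Ω → ℝ) (n : ℕ) (ω : Ω) : ℝ≥0∞ :=
  ∑' i, ENNReal.ofReal (C (n + i) ω / weight a (n + i + 1))

lemma tail_eq_add (n : ℕ) (ω : Ω) :
    tail a C n ω = ENNReal.ofReal (C n ω / weight a (n + 1)) + tail a C (n + 1) ω := by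
  rw [tail, tail, tsum_eq_zero_add' ENNReal.summable]
  simp only [add_zero]
  congr 1
  exact tsum_congr fun i => by rw [show n + (i + 1) = n + 1 + i by omega]

lemma measurable_tail (hC : ∀ n, Measurable (C n)) (n : ℕ) : Measurable (tail a C n) :=
  Measurable.tsum fun i => ((hC (n + i)).div_const _).ennreal_ofReal

structure AlmostSupermartingale (ℱ : Filtration ℕ m) (P : Measure Ω) (X V C : ℕ → Ω → ℝ)
    (a u : ℕ → ℝ) : Prop where
  adapted_X : Adapted ℱ X
  adapted_C : Adapted ℱ C
  nonneg_X : ∀ n, 0 ≤ᵐ[P] X n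
  nonneg_V : ∀ n, 0 ≤ᵐ[P] V n
  nonneg_C : ∀ n, 0 ≤ᵐ[P] C n
  integrable_X : ∀ n, Integrable (X n) P
  integrable_V : ∀ n, Integrable (V n) P
  integrable_C : ∀ n, Integrable (C n) P
  nonneg_a : ∀ n, 0 ≤ a n
  nonneg_u : ∀ n, 0 ≤ u n
  condExp_le : ∀ n, ∀ᵐ ω ∂P, P[X (n + 1) | ℱ n] ω ≤ (1 + a n) * X n ω - u n * V n ω + C n ω

noncomputable def lyapunov (ℱ : Filtration ℕ m) (P : Measure Ω) (a : ℕ → ℝ) (X C : ℕ → Ω → ℝ)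
    (n : ℕ) (ω : Ω) : ℝ :=
  X n ω / weight a n + P[fun ω => (tail a C n ω).toReal | ℱ n] ω

lemma div_weight_le_lyapunov (ℱ : Filtration ℕ m) (P : Measure Ω) (a : ℕ → ℝ) (X C : ℕ → Ω → ℝ)
    (n : ℕ) :
    ∀ᵐ ω ∂P, X n ω / weight a n ≤ lyapunov ℱ P a X C n ω := by
  filter_upwards [condExp_nonneg (m := ℱ n) (μ := P)
    (ae_of_all _ fun ω => (tail a C n ω).toReal_nonneg)] with ω hω
  exact le_add_of_nonneg_right hω

namespace AlmostSupermartingale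

variable (h : AlmostSupermartingale ℱ P X V C a u)
include h

lemma measurable_C (n : ℕ) : Measurable (C n) := (h.adapted_C n).mono (ℱ.le n) le_rfl

lemma integral_succ_le [IsFiniteMeasure P] (n : ℕ) :
    ∫ ω, X (n + 1) ω ∂P ≤
      (1 + a n) * ∫ ω, X n ω ∂P - u n * ∫ ω, V n ω ∂P + ∫ ω, C n ω ∂P := by
  have hX := (h.integrable_X n).const_mul (1 + a n)
  have hV := (h.integrable_V n).const_mul (u n)
  have hXV : Integrable (fun ω => (1 + a n) * X n ω - u n * V n ω) P := hX.sub hV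
  calc ∫ ω, X (n + 1) ω ∂P = ∫ ω, P[X (n + 1) | ℱ n] ω ∂P := (integral_condExp (ℱ.le n)).symm
    _ ≤ ∫ ω, ((1 + a n) * X n ω - u n * V n ω + C n ω) ∂P :=
      integral_mono_ae integrable_condExp (hXV.add (h.integrable_C n)) (h.condExp_le n)
    _ = _ := by
      rw [integral_add hXV (h.integrable_C n), integral_sub hX hV, integral_const_mul,
        integral_const_mul]

lemma lyapunov_nonneg (n : ℕ) : 0 ≤ᵐ[P] lyapunov ℱ P a X C n := by
  filter_upwards [h.nonneg_X n, div_weight_le_lyapunov ℱ P a X C n] with ω (hX : 0 ≤ X n ω) hU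
  exact (div_nonneg hX (weight_pos h.nonneg_a n).le).trans hU

lemma le_mul_lyapunov {K : ℝ} (hK : ∀ n, weight a n ≤ K) (n : ℕ) :
    ∀ᵐ ω ∂P, X n ω ≤ K * lyapunov ℱ P a X C n ω := by
  filter_upwards [h.nonneg_X n, div_weight_le_lyapunov ℱ P a X C n] with ω (hX : 0 ≤ X n ω) hU
  have hp := weight_pos h.nonneg_a n
  calc X n ω = weight a n * (X n ω / weight a n) := by field_simp
    _ ≤ K * lyapunov ℱ P a X C n ω :=
      mul_le_mul (hK n) hU (div_nonneg hX hp.le) (hp.le.trans (hK n))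

lemma sum_mul_integral_le [IsFiniteMeasure P] {K : ℝ} (hK : ∀ n, weight a n ≤ K)
    (hCsum : Summable fun i => ∫ ω, C i ω ∂P) (N : ℕ) :
    ∑ i ∈ Finset.range N, u i * ∫ ω, V i ω ∂P ≤
      K * (∫ ω, X 0 ω ∂P + ∑' i, ∫ ω, C i ω ∂P) :=
  sum_mul_le h.nonneg_a hK (fun n => integral_nonneg_of_ae (h.nonneg_X n))
    (fun n => mul_nonneg (h.nonneg_u n) (integral_nonneg_of_ae (h.nonneg_V n)))
    (fun n => integral_nonneg_of_ae (h.nonneg_C n)) hCsum h.integral_succ_le N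

section

variable (hCsum : Summable fun i => ∫ ω, C i ω ∂P)
include hCsum

lemma lintegral_tail_le (n : ℕ) :
    ∫⁻ ω, tail a C n ω ∂P ≤ ENNReal.ofReal (∑' i, ∫ ω, C (n + i) ω ∂P) := by
  have hsum : Summable fun i => ∫ ω, C (n + i) ω ∂P := by
    simpa only [add_comm n] using (summable_nat_add_iff n).2 hCsum
  unfold tail
  rw [lintegral_tsum fun i => ((h.measurable_C _).div_const _).ennreal_ofReal.aemeasurable,
    ENNReal.ofReal_tsum_of_nonneg (fun i => integral_nonneg_of_ae (h.nonneg_C _)) hsum]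
  refine ENNReal.tsum_le_tsum fun i => ?_
  rw [← ofReal_integral_eq_lintegral_ofReal ((h.integrable_C _).div_const _)
    (by filter_upwards [h.nonneg_C (n + i)] with ω (hω : 0 ≤ C (n + i) ω)
          using div_nonneg hω (weight_pos h.nonneg_a _).le), integral_div]
  exact ENNReal.ofReal_le_ofReal
    (div_le_self (integral_nonneg_of_ae (h.nonneg_C _)) (one_le_weight h.nonneg_a _))

lemma lintegral_tail_ne_top (n : ℕ) : ∫⁻ ω, tail a C n ω ∂P ≠ ∞ :=
  ne_top_of_le_ne_top ENNReal.ofReal_ne_top (h.lintegral_tail_le hCsum n)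

lemma integrable_toReal_tail (n : ℕ) : Integrable (fun ω => (tail a C n ω).toReal) P :=
  integrable_toReal_of_lintegral_ne_top (measurable_tail h.measurable_C n).aemeasurable
    (h.lintegral_tail_ne_top hCsum n)

lemma integral_toReal_tail_le (n : ℕ) :
    ∫ ω, (tail a C n ω).toReal ∂P ≤ ∑' i, ∫ ω, C (n + i) ω ∂P := by
  rw [integral_toReal (measurable_tail h.measurable_C n).aemeasurable
    (ae_lt_top (measurable_tail h.measurable_C n) (h.lintegral_tail_ne_top hCsum n))]
  exact ENNReal.toReal_le_of_le_ofReal (tsum_nonneg fun i => integral_nonneg_of_ae (h.nonneg_C _))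
    (h.lintegral_tail_le hCsum n)

lemma toReal_tail_ae_eq (n : ℕ) :
    (fun ω => (tail a C n ω).toReal) =ᵐ[P]
      fun ω => C n ω / weight a (n + 1) + (tail a C (n + 1) ω).toReal := by
  filter_upwards [ae_lt_top (measurable_tail h.measurable_C n) (h.lintegral_tail_ne_top hCsum n),
    h.nonneg_C n] with ω hω (hC : 0 ≤ C n ω)
  rw [tail_eq_add] at hω ⊢
  rw [ENNReal.toReal_add ENNReal.ofReal_ne_top (ENNReal.add_lt_top.1 hω).2.ne,
    ENNReal.toReal_ofReal (div_nonneg hC (weight_pos h.nonneg_a _).le)]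

theorem supermartingale_lyapunov [IsFiniteMeasure P] :
    Supermartingale (lyapunov ℱ P a X C) ℱ P := by
  set T : ℕ → Ω → ℝ := fun n ω => (tail a C n ω).toReal
  have hdef : ∀ n, lyapunov ℱ P a X C n = (weight a n)⁻¹ • X n + P[T n | ℱ n] := fun n => by
    ext ω; simp [lyapunov, T, div_eq_inv_mul]
  refine supermartingale_nat (fun n => hdef n ▸
      (((h.adapted_X n).stronglyMeasurable.const_smul _).add stronglyMeasurable_condExp))
    (fun n => hdef n ▸ ((h.integrable_X n).smul _).add integrable_condExp) fun n => ?_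
  have hU : P[lyapunov ℱ P a X C (n + 1) | ℱ n] =ᵐ[P]
      fun ω => P[X (n + 1) | ℱ n] ω / weight a (n + 1) + P[T (n + 1) | ℱ n] ω := by
    rw [hdef]
    filter_upwards [condExp_add ((h.integrable_X (n + 1)).smul (weight a (n + 1))⁻¹)
        integrable_condExp (ℱ n),
      condExp_condExp_of_le (μ := P) (f := T (n + 1)) (ℱ.mono n.le_succ) (ℱ.le (n + 1)),
      condExp_smul (μ := P) (weight a (n + 1))⁻¹ (X (n + 1)) (ℱ n)] with ω h₁ h₂ h₃
    rw [h₁, Pi.add_apply, h₂, h₃, Pi.smul_apply, smul_eq_mul, inv_mul_eq_div]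
  have hT : P[T n | ℱ n] =ᵐ[P] fun ω => C n ω / weight a (n + 1) + P[T (n + 1) | ℱ n] ω := by
    have hC : P[fun ω => C n ω / weight a (n + 1) | ℱ n] = fun ω => C n ω / weight a (n + 1) :=
      condExp_of_stronglyMeasurable (ℱ.le n) ((h.adapted_C n).div_const _).stronglyMeasurable
        ((h.integrable_C n).div_const _)
    filter_upwards [condExp_congr_ae (m := ℱ n) (h.toReal_tail_ae_eq hCsum n),
      condExp_add ((h.integrable_C n).div_const (weight a (n + 1)))
        (h.integrable_toReal_tail hCsum (n + 1)) (ℱ n)] with ω h₁ h₂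
    simp only [Pi.add_apply, hC] at h₂
    exact h₁.trans h₂
  filter_upwards [hU, hT, h.condExp_le n, h.nonneg_V n] with ω hU hT hr (hV : 0 ≤ V n ω)
  have huV := mul_nonneg (h.nonneg_u n) hV
  rw [hU, lyapunov, hT, ← add_assoc, ← one_add_mul_add_div_weight_succ h.nonneg_a]
  gcongr
  · exact (weight_pos h.nonneg_a _).le
  · linarith

lemma integral_comp_lyapunov_le [IsProbabilityMeasure P]
    {f : ℝ → ℝ} (hf : ConcaveOn ℝ (Set.Ici 0) f) (h0 : 0 ≤ f 0)
    (hmono : MonotoneOn f (Set.Ici 0)) (hcont : ContinuousOn f (Set.Ici 0)) (n : ℕ) :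
    ∫ ω, f (max (lyapunov ℱ P a X C n ω) 0) ∂P ≤
      ∫ ω, f (X n ω) ∂P + f (∑' i, ∫ ω, C (n + i) ω ∂P) := by
  set Y := P[fun ω => (tail a C n ω).toReal | ℱ n]
  have hY0 : 0 ≤ᵐ[P] Y := condExp_nonneg (ae_of_all _ fun ω => (tail a C n ω).toReal_nonneg)
  have hYint : Integrable Y P := integrable_condExp
  have hfX := hf.integrable_comp h0 hmono hcont (h.integrable_X n) (h.nonneg_X n)
  have hfY := hf.integrable_comp h0 hmono hcont hYint hY0
  have hpoint : ∀ᵐ ω ∂P, f (max (lyapunov ℱ P a X C n ω) 0) ≤ f (X n ω) + f (Y ω) := by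
    filter_upwards [h.nonneg_X n, hY0] with ω (hX : 0 ≤ X n ω) (hY : 0 ≤ Y ω)
    have hp := weight_pos h.nonneg_a n
    have hXp : 0 ≤ X n ω / weight a n := div_nonneg hX hp.le
    rw [lyapunov, max_eq_left (add_nonneg hXp hY)]
    refine (hf.map_add_le h0 hXp hY).trans (add_le_add_left ?_ _)
    exact hmono hXp hX (div_le_self hX (one_le_weight h.nonneg_a n))
  have hjensen : ∫ ω, f (Y ω) ∂P ≤ f (∑' i, ∫ ω, C (n + i) ω ∂P) := by
    refine (hf.le_map_integral hcont isClosed_Ici hY0 hYint hfY).trans (hmono ?_ ?_ ?_)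
    · exact integral_nonneg_of_ae hY0
    · exact tsum_nonneg fun i => integral_nonneg_of_ae (h.nonneg_C _)
    · rw [integral_condExp (ℱ.le n)]
      exact h.integral_toReal_tail_le hCsum n
  calc ∫ ω, f (max (lyapunov ℱ P a X C n ω) 0) ∂P ≤ ∫ ω, (f (X n ω) + f (Y ω)) ∂P :=
        integral_mono_ae ((hf.integrable_comp h0 hmono hcont
          (((h.integrable_X n).div_const _).add hYint).pos_part
          (ae_of_all _ fun ω => le_max_right _ _))) (hfX.add hfY) hpoint
    _ ≤ _ := by rw [integral_add hfX hfY]; linarith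

lemma exists_le_integral_comp_lyapunov_lt [IsProbabilityMeasure P] {f ψ κ : ℝ → ℝ}
    (hf : SICC f ψ κ) {K L M t δ : ℝ} {k : ℕ} {θ : ℝ → ℕ} (hK : ∀ n, weight a n ≤ K)
    (hL : ∫ ω, X 0 ω ∂P < L) (hM : ∑' i, ∫ ω, C i ω ∂P < M)
    (hθ : ∀ b > 0, b ≤ ∑ i ∈ Finset.Icc k (θ b), u i) (hk : ∑' i, ∫ ω, C (k + i) ω ∂P < κ δ)
    (ht : 0 < t) (hδ : 0 < δ) (hV : ∀ n, ∫ ω, V n ω ∂P < t → ∫ ω, f (X n ω) ∂P < δ) :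
    ∃ n₀ ≤ θ (K * (L + M) / t), ∫ ω, f (max (lyapunov ℱ P a X C n₀ ω) 0) ∂P < 2 * δ := by
  have hC0 : ∀ i, 0 ≤ ∫ ω, C i ω ∂P := fun i => integral_nonneg_of_ae (h.nonneg_C i)
  have hK₀ : 0 < K := zero_lt_one.trans_le ((one_le_weight h.nonneg_a 0).trans (hK 0))
  have hLM : 0 < L + M := by
    linarith [integral_nonneg_of_ae (h.nonneg_X 0), (tsum_nonneg hC0 : 0 ≤ ∑' i, ∫ ω, C i ω ∂P)]
  have hsum : ∀ N, ∑ i ∈ Finset.range N, u i * ∫ ω, V i ω ∂P < t * (K * (L + M) / t) := by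
    intro N
    rw [mul_div_cancel₀ _ ht.ne']
    exact (h.sum_mul_integral_le hK hCsum N).trans_lt (by gcongr)
  obtain ⟨n₀, hn₀, hVn₀⟩ := Finset.exists_mem_Icc_lt_of_sum_mul_lt h.nonneg_u
    (fun n => integral_nonneg_of_ae (h.nonneg_V n)) ht.le
    (hθ _ (div_pos (mul_pos hK₀ hLM) ht)) (hsum _)
  rw [Finset.mem_Icc] at hn₀
  have htail := (tsum_nat_add_le_of_le hC0 hCsum hn₀.1).trans_lt hk
  refine ⟨n₀, hn₀.2, ?_⟩
  linarith [h.integral_comp_lyapunov_le hCsum hf.concaveOn hf.map_zero.ge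
      hf.strictMonoOn.monotoneOn hf.continuousOn n₀,
    hV n₀ hVn₀, hf.kappa_mod _ (tsum_nonneg fun i => hC0 _) δ hδ htail]

end

end AlmostSupermartingale

end RobbinsSiegmund

theorem RobbinsSiegmund.rates_of_supermartingale {Ω : Type*} {m : MeasurableSpace Ω}
    {P : Measure Ω} [IsFiniteMeasure P] {ℱ : Filtration ℕ m} {X g : ℕ → Ω → ℝ} {f : ℝ → ℝ}
    {c : ℝ} {ρ : ℝ → ℕ} (hg : Supermartingale g ℱ P) (hg0 : 0 ≤ g) (hc : 0 < c)
    (hmono : MonotoneOn f (Set.Ici 0)) (hpos : ∀ ε > 0, 0 < f ε) (hX0 : ∀ n, 0 ≤ᵐ[P] X n)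
    (hfX : ∀ n, Integrable (fun ω => f (X n ω)) P) (hXg : ∀ n, ∀ᵐ ω ∂P, f (X n ω) * c ≤ g n ω)
    (hρ : ∀ δ > 0, ∃ n₀ ≤ ρ δ, ∫ ω, g n₀ ω ∂P < 2 * δ) :
    (∀ ε > 0, ∀ n ≥ ρ (ε * c / 2), ∫ ω, f (X n ω) ∂P < ε) ∧
    (∀ lam > 0, ∀ ε > 0,
      P {ω | ∃ n, ρ (lam * f ε * c / 2) ≤ n ∧ ε ≤ X n ω} < ENNReal.ofReal lam) := by
  refine ⟨fun ε hε n hn => ?_, fun lam hlam ε hε => ?_⟩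
  · obtain ⟨n₀, hn₀, hg₀⟩ := hρ (ε * c / 2) (by positivity)
    have hfXg : (∫ ω, f (X n ω) ∂P) * c ≤ ∫ ω, g n ω ∂P := by
      rw [← integral_mul_const]
      exact integral_mono_ae ((hfX n).mul_const _) (hg.integrable n) (hXg n)
    have hgn : ∫ ω, g n ω ∂P ≤ ∫ ω, g n₀ ω ∂P := by
      simpa using hg.setIntegral_le (hn₀.trans hn) MeasurableSet.univ
    exact lt_of_mul_lt_mul_right (by linarith) hc.le
  · have hfε := hpos ε hε
    obtain ⟨n₀, hn₀, hg₀⟩ := hρ (lam * f ε * c / 2) (by positivity)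
    have hsub : {ω | ∃ n, ρ (lam * f ε * c / 2) ≤ n ∧ ε ≤ X n ω} ≤ᵐ[P]
        {ω | ∃ n, n₀ ≤ n ∧ f ε * c ≤ g n ω} := by
      filter_upwards [ae_all_iff.2 hX0, ae_all_iff.2 hXg] with ω hX hXg ⟨n, hn, hεX⟩
      exact ⟨n, hn₀.trans hn,
        (mul_le_mul_of_nonneg_right (hmono hε.le (hX n) hεX) hc.le).trans (hXg n)⟩
    calc _ ≤ P {ω | ∃ n, n₀ ≤ n ∧ f ε * c ≤ g n ω} := measure_mono_ae hsub
      _ ≤ ENNReal.ofReal ((∫ ω, g n₀ ω ∂P) / (f ε * c)) :=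
        hg.measure_exists_ge_le hg0 (by positivity) n₀
      _ < ENNReal.ofReal lam := by
        rw [ENNReal.ofReal_lt_ofReal_iff hlam, div_lt_iff₀ (by positivity)]
        linarith

open RobbinsSiegmund

theorem robbins_siegmund_quantitative_general
    {Ω : Type*} {m : MeasurableSpace Ω} {P : Measure Ω} [IsProbabilityMeasure P]
    (ℱ : Filtration ℕ m) (X V C : ℕ → Ω → ℝ)
    (hXadp : Adapted ℱ X) (hCadp : Adapted ℱ C)
    (hXnn : ∀ n, 0 ≤ᵐ[P] X n) (hVnn : ∀ n, 0 ≤ᵐ[P] V n) (hCnn : ∀ n, 0 ≤ᵐ[P] C n)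
    (hXint : ∀ n, Integrable (X n) P) (hVint : ∀ n, Integrable (V n) P)
    (hCint : ∀ n, Integrable (C n) P)
    (a u : ℕ → ℝ) (hann : ∀ n, 0 ≤ a n) (hunn : ∀ n, 0 ≤ u n)
    -- the almost-supermartingale property
    (hrec : ∀ n, ∀ᵐ ω ∂P,
        (P[X (n+1) | ℱ n]) ω ≤ (1 + a n) * X n ω - u n * V n ω + C n ω)
    (K L M : ℝ)
    -- E[X_0] < L
    (hL : ∫ ω, X 0 ω ∂P < L)
    -- ∏_{i=0}^∞ (1+a_i) < K
    (hprod : ∃ l, l < K ∧ Tendsto (fun n => ∏ i ∈ Finset.range n, (1 + a i)) atTop (𝓝 l))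
    -- Σ_{i=0}^∞ E[C_i] < M
    (hCsum : Summable fun i => ∫ ω, C i ω ∂P)
    (hM : (∑' i, ∫ ω, C i ω ∂P) < M)
    -- θ is a rate of divergence for Σ u_i, χ a rate of convergence for Σ E[C_i]
    (χ : ℝ → ℕ) (θ : ℕ → ℝ → ℕ)
    (hθ : ∀ b > (0:ℝ), ∀ k : ℕ, b ≤ ∑ i ∈ Finset.Icc k (θ k b), u i)
    (hχ : ∀ ε > (0:ℝ), ∑' i : ℕ, ∫ ω, C (χ ε + i) ω ∂P < ε)
    -- regularity modulus τ relating (V_n) and (f(X_n)) in expectation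
    (f ψ κ : ℝ → ℝ) (hf : SICC f ψ κ)
    (τ : ℝ → ℝ) (hτpos : ∀ ε > (0:ℝ), 0 < τ ε)
    (hτ : ∀ ε > (0:ℝ), ∀ n : ℕ, ∫ ω, V n ω ∂P < τ ε → ∫ ω, f (X n ω) ∂P < ε) :
    -- (a) ρ(ε) := θ(χ(κ(ε')), K(L+M)/τ(ε')), ε' := ε·ψ(K⁻¹)/2, is a rate for E[f(X_n)] → 0
    (∀ ε > (0:ℝ), ∀ n ≥ θ (χ (κ (ε * ψ K⁻¹ / 2))) (K * (L + M) / τ (ε * ψ K⁻¹ / 2)),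
        ∫ ω, f (X n ω) ∂P < ε) ∧
    -- (b) ρ'(λ,ε) := ρ(λ·f(ε)) is a rate of almost sure convergence for X_n → 0
    (∀ lam > (0:ℝ), ∀ ε > (0:ℝ),
        P {ω | ∃ n, θ (χ (κ (lam * f ε * ψ K⁻¹ / 2)))
            (K * (L + M) / τ (lam * f ε * ψ K⁻¹ / 2)) ≤ n ∧ ε ≤ X n ω}
          < ENNReal.ofReal lam) := by
  obtain ⟨l, hlK, hl⟩ := hprod
  have h : AlmostSupermartingale ℱ P X V C a u :=
    ⟨hXadp, hCadp, hXnn, hVnn, hCnn, hXint, hVint, hCint, hann, hunn, hrec⟩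
  have hweight : ∀ n, weight a n ≤ K := fun n => (weight_le_of_tendsto hann hl n).trans hlK.le
  have hK : 1 ≤ K := (one_le_weight hann 0).trans (hweight 0)
  have hmono : MonotoneOn f (Set.Ici 0) := hf.strictMonoOn.monotoneOn
  have hsuper : Supermartingale (fun n ω => f (max (lyapunov ℱ P a X C n ω) 0)) ℱ P :=
    (h.supermartingale_lyapunov hCsum).comp_concaveOn h.lyapunov_nonneg hf.concaveOn
      hf.map_zero.ge hmono hf.continuousOn
  have hψ : 0 < ψ K⁻¹ :=
    hf.psi_pos _ ⟨inv_pos.2 (zero_lt_one.trans_le hK), inv_le_one_of_one_le₀ hK⟩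
  have hdom : ∀ n, ∀ᵐ ω ∂P, f (X n ω) * ψ K⁻¹ ≤ f (max (lyapunov ℱ P a X C n ω) 0) := fun n => by
    filter_upwards [hXnn n, h.le_mul_lyapunov hweight n] with ω hX hXU
    exact hf.mul_psi_inv_le hK hX (hXU.trans (by gcongr; exact le_max_left _ _))
  have hrate : ∀ δ > 0, ∃ n₀ ≤ θ (χ (κ δ)) (K * (L + M) / τ δ),
      ∫ ω, f (max (lyapunov ℱ P a X C n₀ ω) 0) ∂P < 2 * δ := fun δ hδ =>
    h.exists_le_integral_comp_lyapunov_lt hCsum hf hweight hL hM (fun b hb => hθ b hb _)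
      (hχ _ (hf.kappa_pos δ hδ)) (hτpos δ hδ) hδ (hτ δ hδ)
  exact rates_of_supermartingale hsuper (fun n ω => hf.nonneg _ (le_max_right _ _)) hψ hmono
    (fun ε hε => hf.map_zero ▸ hf.strictMonoOn Set.self_mem_Ici hε.le hε) hXnn
    (fun n => hf.concaveOn.integrable_comp hf.map_zero.ge hmono hf.continuousOn (hXint n) (hXnn n))
    hdom hrate

/-- Quantitative variant of the Robbins-Siegmund theorem: rates of convergence in mean for
`f(X_n)` and of almost sure convergence for `X_n` under the almost-supermartingale condition
`E[X_{n+1}|F_n] ≤ (1+a_n)X_n − u_n V_n + C_n` and a regularity modulus `τ`. -/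
theorem robbins_siegmund_quantitative
    {Ω : Type*} {m : MeasurableSpace Ω} {P : Measure Ω} [IsProbabilityMeasure P]
    (ℱ : Filtration ℕ m) (X V C : ℕ → Ω → ℝ)
    (hXadp : Adapted ℱ X) (hVadp : Adapted ℱ V) (hCadp : Adapted ℱ C)
    (hXnn : ∀ n, 0 ≤ᵐ[P] X n) (hVnn : ∀ n, 0 ≤ᵐ[P] V n) (hCnn : ∀ n, 0 ≤ᵐ[P] C n)
    (hXint : ∀ n, Integrable (X n) P) (hVint : ∀ n, Integrable (V n) P)
    (hCint : ∀ n, Integrable (C n) P)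
    (a u : ℕ → ℝ) (hann : ∀ n, 0 ≤ a n) (hunn : ∀ n, 0 ≤ u n)
    -- the almost-supermartingale property
    (hrec : ∀ n, ∀ᵐ ω ∂P,
        (P[X (n+1) | ℱ n]) ω ≤ (1 + a n) * X n ω - u n * V n ω + C n ω)
    (K L M : ℝ) (hKpos : 0 < K) (hLpos : 0 < L) (hMpos : 0 < M)
    -- E[X_0] < L
    (hL : ∫ ω, X 0 ω ∂P < L)
    -- ∏_{i=0}^∞ (1+a_i) < K
    (hprod : ∃ l, l < K ∧ Tendsto (fun n => ∏ i ∈ Finset.range n, (1 + a i)) atTop (𝓝 l))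
    -- Σ_{i=0}^∞ E[C_i] < M
    (hCsum : Summable fun i => ∫ ω, C i ω ∂P)
    (hM : (∑' i, ∫ ω, C i ω ∂P) < M)
    -- θ is a rate of divergence for Σ u_i, χ a rate of convergence for Σ E[C_i]
    (χ : ℝ → ℕ) (θ : ℕ → ℝ → ℕ)
    (hθ : ∀ b > (0:ℝ), ∀ k : ℕ, b ≤ ∑ i ∈ Finset.Icc k (θ k b), u i)
    (hχ : ∀ ε > (0:ℝ), ∑' i : ℕ, ∫ ω, C (χ ε + i) ω ∂P < ε)
    -- regularity modulus τ relating (V_n) and (f(X_n)) in expectation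
    (f ψ κ : ℝ → ℝ) (hf : SICC f ψ κ)
    (τ : ℝ → ℝ) (hτpos : ∀ ε > (0:ℝ), 0 < τ ε)
    (hτ : ∀ ε > (0:ℝ), ∀ n : ℕ, ∫ ω, V n ω ∂P < τ ε → ∫ ω, f (X n ω) ∂P < ε) :
    -- (a) ρ(ε) := θ(χ(κ(ε')), K(L+M)/τ(ε')), ε' := ε·ψ(K⁻¹)/2, is a rate for E[f(X_n)] → 0
    (∀ ε > (0:ℝ), ∀ n ≥ θ (χ (κ (ε * ψ K⁻¹ / 2))) (K * (L + M) / τ (ε * ψ K⁻¹ / 2)),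
        ∫ ω, f (X n ω) ∂P < ε) ∧
    -- (b) ρ'(λ,ε) := ρ(λ·f(ε)) is a rate of almost sure convergence for X_n → 0
    (∀ lam > (0:ℝ), ∀ ε > (0:ℝ),
        P {ω | ∃ n, θ (χ (κ (lam * f ε * ψ K⁻¹ / 2)))
            (K * (L + M) / τ (lam * f ε * ψ K⁻¹ / 2)) ≤ n ∧ ε ≤ X n ω}
          < ENNReal.ofReal lam) :=
  robbins_siegmund_quantitative_general ℱ X V C hXadp hCadp hXnn hVnn hCnn hXint hVint hCint a u
    hann hunn hrec K L M hL hprod hCsum hM χ θ hθ hχ f ψ κ hf τ hτpos hτ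
end

section
/- In the setting of the abstract Robbins-Monro scheme in a separable Hilbert space H — x_{n+1} := x_n − a_n·y_n with z ∈ H, E[‖x_0 − z‖²] < L, F_n := σ(x_0, y_0, …, x_{n−1}, y_{n−1}), conditions (i) E[‖y_n‖² | F_n] ≤ c·‖x_n − z‖² + d_n a.s. with sup_n E[d_n] ≤ d, (ii) ⟨x_n − z, E[y_n | F_n]⟩ ≥ 0 a.s., and (iv) Σ_{n=k}^{θ(k,b)} a_n ≥ b for all k, b, and Σ_{n=0}^∞ a_n² < M with Σ_{n=χ(ε)}^∞ a_n² < ε for all ε > 0 — suppose the regularity condition (iii) is replaced by: for all ε > 0 and n ∈ ℕ, E[⟨x_n − z, E[y_n | F_n]⟩] < τ(ε) implies E[‖x_n − z‖] < ε, for some τ : (0,∞) → (0,∞). Then: (a) E[‖x_n − z‖] < ε for all n ≥ ρ(ε) := θ(χ((K₁ε)²/d), K₂/τ(K₁ε)), where K₁ := e^{−cM/2}/2 and K₂ := e^{cM}·(L + dM); and (b) P(∃ n ≥ ρ'(λ,ε), ‖x_n − z‖ ≥ ε) < λ for all λ, ε > 0, where ρ'(λ,ε) := ρ(λε). -/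
/-!
Write `V n = ‖x n - z‖ ^ 2` and `t n = E⟪x n - z, E[y n | F n]⟫ ≥ 0`. Expanding
`‖(x n - z) - a n • y n‖ ^ 2` and using (i) gives, after conditioning,
`E[V (n+1) | F n] ≤ (1 + c a_n²) V n - 2 a_n ⟪x n - z, E[y n | F n]⟫ + a_n² d_n`.

Taking expectations and telescoping bounds `∑ a_n t_n` by `K₂ = e^{cM}(L + dM)`; as `∑ a_n ≥ K₂ / τ`
on the window `[χ(…), ρ(ε)]`, some `n₀` in it has `t n₀ < τ(K₁ε)`, hence `E‖x n₀ - z‖ < K₁ε` by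
(iii').

Dropping the drift term by (ii) instead, for every horizon `N` the process
`√(∏_{m ≤ i < N} (1 + c a_i²) · (V m + E[∑_{m ≤ i < N} a_i² d_i | F m]))` is a nonnegative
supermartingale dominating `‖x m - z‖` on `[n₀, N]` (conditional Jensen for the concave square
root). Its mean at `n₀` is at most `e^{cM/2}(K₁ε + √(d ∑_{i ≥ χ} a_i²)) < ε`, uniformly in `N`.
This bounds `E‖x N - z‖`, and, by the maximal inequality for nonnegative supermartingales, also
`ε · P(∃ k ∈ [n₀, N], ‖x k - z‖ ≥ ε)`.
-/

open MeasureTheory Finset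
open scoped RealInnerProductSpace

theorem add_sum_le_prod_mul_add_sum_of_succ_le {e u b g : ℕ → ℝ} (hu : ∀ n, 0 ≤ u n)
    (hb : ∀ n, 0 ≤ b n) (hg : ∀ n, 0 ≤ g n)
    (hrec : ∀ n, e (n + 1) + u n ≤ (1 + b n) * e n + g n) (N : ℕ) :
    e N + ∑ i ∈ range N, u i ≤ (∏ i ∈ range N, (1 + b i)) * (e 0 + ∑ i ∈ range N, g i) := by
  induction N with
  | zero => simp
  | succ N ih =>
    have hS : 0 ≤ ∑ i ∈ range N, u i := sum_nonneg fun i _ => hu i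
    have hP : 1 ≤ ∏ i ∈ range (N + 1), (1 + b i) :=
      one_le_prod fun i _ => le_add_of_nonneg_right (hb i)
    rw [sum_range_succ, sum_range_succ, prod_range_succ, mul_comm (∏ i ∈ range N, _)]
    calc e (N + 1) + (∑ i ∈ range N, u i + u N)
        ≤ (1 + b N) * (e N + ∑ i ∈ range N, u i) + g N := by
          nlinarith [hrec N, mul_nonneg (hb N) hS]
      _ ≤ (1 + b N) * ((∏ i ∈ range N, (1 + b i)) * (e 0 + ∑ i ∈ range N, g i)) + g N := by
          gcongr; linarith [hb N]
      _ ≤ _ := by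
          rw [prod_range_succ, mul_comm] at hP
          nlinarith [hg N, hP]

theorem exists_mem_Icc_lt_of_sum_mul_lt {a t : ℕ → ℝ} {B τ : ℝ} (ha : ∀ n, 0 ≤ a n)
    (ht : ∀ n, 0 ≤ t n) (hτ : 0 < τ) (hB : ∀ N, ∑ i ∈ range N, a i * t i < B) {k m : ℕ}
    (hkm : B / τ ≤ ∑ i ∈ Icc k m, a i) : ∃ n ∈ Icc k m, t n < τ := by
  by_contra! h
  have hsub : Icc k m ⊆ range (m + 1) := fun i hi => by simp at hi ⊢; omega
  have := calc B = τ * (B / τ) := by field_simp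
    _ ≤ τ * ∑ i ∈ Icc k m, a i := by gcongr
    _ ≤ ∑ i ∈ Icc k m, a i * t i := by
        rw [mul_sum]; exact sum_le_sum fun i hi => by nlinarith [h i hi, ha i]
    _ ≤ ∑ i ∈ range (m + 1), a i * t i :=
        sum_le_sum_of_subset_of_nonneg hsub fun i _ _ => mul_nonneg (ha i) (ht i)
  linarith [hB (m + 1)]

theorem sum_Ico_le_tsum_nat_add {f : ℕ → ℝ} (hf : ∀ n, 0 ≤ f n) (hs : Summable f) {k j : ℕ}
    (hkj : k ≤ j) (N : ℕ) : ∑ i ∈ Ico j N, f i ≤ ∑' i, f (k + i) :=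
  calc ∑ i ∈ Ico j N, f i ≤ ∑ i ∈ Ico k N, f i :=
        sum_le_sum_of_subset_of_nonneg (Ico_subset_Ico hkj le_rfl) fun i _ _ => hf i
    _ = ∑ i ∈ range (N - k), f (k + i) := sum_Ico_eq_sum_range _ _ _
    _ ≤ ∑' i, f (k + i) :=
        ((summable_nat_add_iff k).mpr hs |>.congr fun i => by rw [add_comm]).sum_le_tsum _
          fun i _ => hf _

section SquareSummable

variable {a : ℕ → ℝ} {c M : ℝ}

theorem prod_one_add_mul_sq_le_exp (hc : 0 ≤ c) (hasum : Summable fun n => a n ^ 2)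
    (haM : ∑' n, a n ^ 2 ≤ M) (s : Finset ℕ) :
    ∏ i ∈ s, (1 + c * a i ^ 2) ≤ Real.exp (c * M) :=
  (Real.prod_one_add_le_exp_sum s fun i => by positivity).trans <| Real.exp_le_exp.mpr <| by
    rw [← mul_sum]
    exact mul_le_mul_of_nonneg_left
      ((hasum.sum_le_tsum s fun i _ => sq_nonneg (a i)).trans haM) hc

theorem sum_mul_lt_exp_mul_of_succ_le {e t : ℕ → ℝ} {d L : ℝ} (ha : ∀ n, 0 ≤ a n)
    (ht : ∀ n, 0 ≤ t n) (he : ∀ n, 0 ≤ e n) (hc : 0 ≤ c) (hd : 0 ≤ d)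
    (hasum : Summable fun n => a n ^ 2) (haM : ∑' n, a n ^ 2 ≤ M) (he0 : e 0 < L)
    (hrec : ∀ n, e (n + 1) + 2 * a n * t n ≤ (1 + c * a n ^ 2) * e n + a n ^ 2 * d) (N : ℕ) :
    ∑ i ∈ range N, a i * t i < Real.exp (c * M) * (L + d * M) := by
  have htel := add_sum_le_prod_mul_add_sum_of_succ_le
    (fun n => mul_nonneg (mul_nonneg two_pos.le (ha n)) (ht n)) (fun n => by positivity)
    (fun n => by positivity) hrec N
  have hsum : ∑ i ∈ range N, a i ^ 2 * d ≤ d * M := by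
    rw [← sum_mul, mul_comm]
    exact mul_le_mul_of_nonneg_left
      ((hasum.sum_le_tsum _ fun i _ => sq_nonneg (a i)).trans haM) hd
  have hinit : 0 ≤ e 0 + ∑ i ∈ range N, a i ^ 2 * d := by
    have := he 0; positivity
  have hgain : ∑ i ∈ range N, a i * t i ≤ ∑ i ∈ range N, 2 * a i * t i :=
    sum_le_sum fun i _ => by nlinarith [mul_nonneg (ha i) (ht i)]
  calc ∑ i ∈ range N, a i * t i ≤ (∏ i ∈ range N, (1 + c * a i ^ 2)) *
        (e 0 + ∑ i ∈ range N, a i ^ 2 * d) := by linarith [he N]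
    _ ≤ Real.exp (c * M) * (e 0 + ∑ i ∈ range N, a i ^ 2 * d) :=
        mul_le_mul_of_nonneg_right (prod_one_add_mul_sq_le_exp hc hasum haM _) hinit
    _ < Real.exp (c * M) * (L + d * M) := mul_lt_mul_of_pos_left (by linarith) (Real.exp_pos _)

theorem exists_lt_forall_sqrt_prod_mul_add_sqrt_le {g : ℕ → ℝ} {d w ε : ℝ} {k n₀ : ℕ}
    (hc : 0 ≤ c) (hd : 0 < d) (hasum : Summable fun n => a n ^ 2) (haM : ∑' n, a n ^ 2 ≤ M)
    (hg : ∀ n, g n ≤ a n ^ 2 * d)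
    (htail : ∑' i, a (k + i) ^ 2 < (Real.exp (-(c * M) / 2) / 2 * ε) ^ 2 / d) (hkn₀ : k ≤ n₀)
    (hw : 0 ≤ w) (hwε : w < Real.exp (-(c * M) / 2) / 2 * ε) :
    ∃ B < ε, ∀ N, √(∏ i ∈ Ico n₀ N, (1 + c * a i ^ 2)) * (w + √(∑ i ∈ Ico n₀ N, g i)) ≤ B := by
  set r := Real.exp (-(c * M) / 2) / 2 * ε
  set T := ∑' i, a (k + i) ^ 2
  have hr : 0 < r := hw.trans_lt hwε
  have hT : √(d * T) < r := (Real.sqrt_lt' hr).2 (by rwa [lt_div_iff₀' hd] at htail)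
  refine ⟨Real.exp (c * M / 2) * (w + √(d * T)), ?_, fun N => ?_⟩
  · have h : Real.exp (c * M / 2) * Real.exp (-(c * M) / 2) = 1 := by
      rw [← Real.exp_add, ← Real.exp_zero]; ring_nf
    calc Real.exp (c * M / 2) * (w + √(d * T)) < Real.exp (c * M / 2) * (r + r) := by gcongr
      _ = ε := by linear_combination ε * h
  · have hS : ∑ i ∈ Ico n₀ N, g i ≤ d * T :=
      calc ∑ i ∈ Ico n₀ N, g i ≤ d * ∑ i ∈ Ico n₀ N, a i ^ 2 := by
            rw [mul_sum]; exact sum_le_sum fun i _ => by linarith [hg i]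
        _ ≤ d * T := mul_le_mul_of_nonneg_left
            (sum_Ico_le_tsum_nat_add (fun n => sq_nonneg (a n)) hasum hkn₀ N) hd.le
    have hP : √(∏ i ∈ Ico n₀ N, (1 + c * a i ^ 2)) ≤ Real.exp (c * M / 2) := by
      rw [Real.exp_half]
      exact Real.sqrt_le_sqrt (prod_one_add_mul_sq_le_exp hc hasum haM _)
    exact mul_le_mul hP (add_le_add_right (Real.sqrt_le_sqrt hS) w) (by positivity)
      (Real.exp_pos _).le

end SquareSummable

noncomputable def robbinsMonroRate (θ : ℕ → ℝ → ℕ) (χ : ℝ → ℕ) (τ : ℝ → ℝ) (c d L M ε : ℝ) : ℕ :=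
  θ (χ ((Real.exp (-(c * M) / 2) / 2 * ε) ^ 2 / d))
    (Real.exp (c * M) * (L + d * M) / τ (Real.exp (-(c * M) / 2) / 2 * ε))

theorem exists_le_robbinsMonroRate {a e t w g : ℕ → ℝ} {c d L M : ℝ} {τ : ℝ → ℝ}
    {θ : ℕ → ℝ → ℕ} {χ : ℝ → ℕ} (ha : ∀ n, 0 ≤ a n) (ht : ∀ n, 0 ≤ t n) (he : ∀ n, 0 ≤ e n)
    (hw : ∀ n, 0 ≤ w n) (hc : 0 ≤ c) (hd : 0 < d) (hasum : Summable fun n => a n ^ 2)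
    (haM : ∑' n, a n ^ 2 ≤ M) (he0 : e 0 < L)
    (hrec : ∀ n, e (n + 1) + 2 * a n * t n ≤ (1 + c * a n ^ 2) * e n + a n ^ 2 * d)
    (hg : ∀ n, g n ≤ a n ^ 2 * d) (hτpos : ∀ ε > (0 : ℝ), 0 < τ ε)
    (hτ : ∀ ε > (0 : ℝ), ∀ n, t n < τ ε → w n < ε)
    (hθ : ∀ k, ∀ b > (0 : ℝ), b ≤ ∑ n ∈ Icc k (θ k b), a n)
    (hχ : ∀ ε > (0 : ℝ), ∑' i, a (χ ε + i) ^ 2 < ε) {ε : ℝ} (hε : 0 < ε) :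
    ∃ n₀ ≤ robbinsMonroRate θ χ τ c d L M ε, ∃ B < ε, ∀ N,
      √(∏ i ∈ Ico n₀ N, (1 + c * a i ^ 2)) * (w n₀ + √(∑ i ∈ Ico n₀ N, g i)) ≤ B := by
  set r := Real.exp (-(c * M) / 2) / 2 * ε
  have hr : 0 < r := by positivity
  have hM : 0 ≤ M := (tsum_nonneg fun n => sq_nonneg (a n)).trans haM
  have hb : 0 < Real.exp (c * M) * (L + d * M) / τ r :=
    div_pos (mul_pos (Real.exp_pos _) (by nlinarith [he 0])) (hτpos r hr)
  obtain ⟨n₀, hn₀, htn₀⟩ := exists_mem_Icc_lt_of_sum_mul_lt ha ht (hτpos r hr)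
    (sum_mul_lt_exp_mul_of_succ_le ha ht he hc hd.le hasum haM he0 hrec) (hθ _ _ hb)
  rw [mem_Icc] at hn₀
  exact ⟨n₀, hn₀.2, exists_lt_forall_sqrt_prod_mul_add_sqrt_le hc hd hasum haM hg
    (hχ _ (by positivity)) hn₀.1 (hw n₀) (hτ r hr n₀ htn₀)⟩

section Hilbert

variable {α E : Type*} {m m0 : MeasurableSpace α} {μ : Measure α}
  [NormedAddCommGroup E] [InnerProductSpace ℝ E]

theorem MeasureTheory.MemLp.integrable_inner {f g : α → E} (hf : MemLp f 2 μ) (hg : MemLp g 2 μ) :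
    Integrable (fun ω => ⟪f ω, g ω⟫) μ :=
  (L2.integrable_inner (𝕜 := ℝ) (hf.toLp f) (hg.toLp g)).congr <| by
    filter_upwards [hf.coeFn_toLp, hg.coeFn_toLp] with ω h1 h2
    rw [h1, h2]

theorem norm_sub_smul_sq (u v : E) (r : ℝ) :
    ‖u - r • v‖ ^ 2 = ‖u‖ ^ 2 - 2 * r * ⟪u, v⟫ + r ^ 2 * ‖v‖ ^ 2 := by
  rw [norm_sub_sq_real, real_inner_smul_right, norm_smul, mul_pow, Real.norm_eq_abs, sq_abs]
  ring

variable [CompleteSpace E]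

theorem condExp_norm_sub_smul_sq (hm : m ≤ m0) [IsFiniteMeasure μ] {X Y : α → E}
    (hXm : StronglyMeasurable[m] X) (hX : MemLp X 2 μ) (hY : MemLp Y 2 μ) (r : ℝ) :
    μ[fun ω => ‖X ω - r • Y ω‖ ^ 2 | m] =ᵐ[μ]
      fun ω => ‖X ω‖ ^ 2 - 2 * r * ⟪X ω, μ[Y | m] ω⟫ + r ^ 2 * μ[fun ω => ‖Y ω‖ ^ 2 | m] ω := by
  have hX2 : Integrable (fun ω => ‖X ω‖ ^ 2) μ := hX.integrable_norm_pow two_ne_zero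
  have hY2 : Integrable (fun ω => ‖Y ω‖ ^ 2) μ := hY.integrable_norm_pow two_ne_zero
  have hXY : Integrable (fun ω => ⟪X ω, Y ω⟫) μ := hX.integrable_inner hY
  have hpull : μ[fun ω => ⟪X ω, Y ω⟫ | m] =ᵐ[μ] fun ω => ⟪X ω, μ[Y | m] ω⟫ :=
    condExp_bilin_of_stronglyMeasurable_left (innerSL ℝ) hXm hXY (hY.integrable one_le_two)
  have hsplit : (fun ω => ‖X ω - r • Y ω‖ ^ 2) =
      (fun ω => ‖X ω‖ ^ 2) - (2 * r) • (fun ω => ⟪X ω, Y ω⟫) + r ^ 2 • fun ω => ‖Y ω‖ ^ 2 := by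
    ext ω; simp [norm_sub_smul_sq]
  have hX2m : μ[fun ω => ‖X ω‖ ^ 2 | m] = fun ω => ‖X ω‖ ^ 2 :=
    condExp_of_stronglyMeasurable hm (hXm.norm.pow 2) hX2
  rw [hsplit]
  filter_upwards [condExp_add (hX2.sub (hXY.smul (2 * r))) (hY2.smul (r ^ 2)) m,
    condExp_sub hX2 (hXY.smul (2 * r)) m, condExp_smul (2 * r) (fun ω => ⟪X ω, Y ω⟫) m,
    condExp_smul (r ^ 2) (fun ω => ‖Y ω‖ ^ 2) m, hpull] with ω h1 h2 h3 h4 h5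
  simp only [h1, Pi.add_apply, h2, Pi.sub_apply, h3, Pi.smul_apply, h4, h5, smul_eq_mul, hX2m]

theorem condExp_norm_sub_smul_sq_le (hm : m ≤ m0) [IsFiniteMeasure μ] {X Y : α → E}
    {D : α → ℝ} {c : ℝ} (hXm : StronglyMeasurable[m] X) (hX : MemLp X 2 μ) (hY : MemLp Y 2 μ)
    (hYD : μ[fun ω => ‖Y ω‖ ^ 2 | m] ≤ᵐ[μ] fun ω => c * ‖X ω‖ ^ 2 + D ω) (r : ℝ) :
    μ[fun ω => ‖X ω - r • Y ω‖ ^ 2 | m] ≤ᵐ[μ]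
      fun ω => (1 + c * r ^ 2) * ‖X ω‖ ^ 2 - 2 * r * ⟪X ω, μ[Y | m] ω⟫ + r ^ 2 * D ω := by
  filter_upwards [condExp_norm_sub_smul_sq hm hXm hX hY r, hYD] with ω h1 h2
  rw [h1]
  nlinarith [mul_le_mul_of_nonneg_left h2 (sq_nonneg r)]

theorem integral_norm_sub_smul_sq_add_le (hm : m ≤ m0) [IsFiniteMeasure μ] {X Y : α → E}
    {D : α → ℝ} {c : ℝ} (hXm : StronglyMeasurable[m] X) (hX : MemLp X 2 μ) (hY : MemLp Y 2 μ)
    (hD : Integrable D μ)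
    (hYD : μ[fun ω => ‖Y ω‖ ^ 2 | m] ≤ᵐ[μ] fun ω => c * ‖X ω‖ ^ 2 + D ω) (r : ℝ) :
    ∫ ω, ‖X ω - r • Y ω‖ ^ 2 ∂μ + 2 * r * ∫ ω, ⟪X ω, μ[Y | m] ω⟫ ∂μ ≤
      (1 + c * r ^ 2) * ∫ ω, ‖X ω‖ ^ 2 ∂μ + r ^ 2 * ∫ ω, D ω ∂μ := by
  have hX2 : Integrable (fun ω => ‖X ω‖ ^ 2) μ := hX.integrable_norm_pow two_ne_zero
  have hXY : Integrable (fun ω => ⟪X ω, μ[Y | m] ω⟫) μ :=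
    hX.integrable_inner (hY.condExp one_le_two)
  have hlin : Integrable
      (fun ω => (1 + c * r ^ 2) * ‖X ω‖ ^ 2 - 2 * r * ⟪X ω, μ[Y | m] ω⟫) μ :=
    (hX2.const_mul _).sub (hXY.const_mul _)
  have h := integral_mono_ae (g := fun ω => (1 + c * r ^ 2) * ‖X ω‖ ^ 2 -
      2 * r * ⟪X ω, μ[Y | m] ω⟫ + r ^ 2 * D ω) integrable_condExp (hlin.add (hD.const_mul _))
    (condExp_norm_sub_smul_sq_le hm hXm hX hY hYD r)
  rw [integral_condExp hm, integral_add hlin (hD.const_mul _),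
    integral_sub (hX2.const_mul _) (hXY.const_mul _), integral_const_mul, integral_const_mul,
    integral_const_mul] at h
  linarith

end Hilbert

theorem setOf_exists_le_le_succ {α : Type*} {P : ℕ → α → Prop} {n₀ N : ℕ} (hN : n₀ ≤ N + 1) :
    {ω | ∃ k, n₀ ≤ k ∧ k ≤ N + 1 ∧ P k ω} =
      {ω | ∃ k, n₀ ≤ k ∧ k ≤ N ∧ P k ω} ∪ {ω | P (N + 1) ω} := by
  ext ω
  simp only [Set.mem_ofPred_eq, Set.mem_union]
  constructor
  · rintro ⟨k, h₀, hk, hP⟩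
    rcases Nat.lt_or_eq_of_le hk with hk | rfl
    · exact .inl ⟨k, h₀, Nat.le_of_lt_succ hk, hP⟩
    · exact .inr hP
  · rintro (⟨k, h₀, hk, hP⟩ | hP)
    · exact ⟨k, h₀, hk.trans N.le_succ, hP⟩
    · exact ⟨N + 1, hN, le_rfl, hP⟩

namespace MeasureTheory

variable {Ω : Type*} {m0 : MeasurableSpace Ω} {μ : Measure Ω} {𝒢 : Filtration ℕ m0}
  {f : ℕ → Ω → ℝ}

theorem StronglyAdapted.measurableSet_exists_le_le (hf : StronglyAdapted 𝒢 f) (ε : ℝ)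
    (n₀ N : ℕ) : MeasurableSet[𝒢 N] {ω | ∃ k, n₀ ≤ k ∧ k ≤ N ∧ ε ≤ f k ω} := by
  have h : {ω | ∃ k, n₀ ≤ k ∧ k ≤ N ∧ ε ≤ f k ω} = ⋃ k ∈ Icc n₀ N, {ω | ε ≤ f k ω} := by
    ext; simp [and_assoc]
  rw [h]
  exact Finset.measurableSet_biUnion _ fun k hk =>
    𝒢.mono (mem_Icc.1 hk).2 _ (measurableSet_le measurable_const (hf k).measurable)

theorem Supermartingale.mul_measureReal_add_setIntegral_compl_le [IsFiniteMeasure μ]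
    (hf : Supermartingale f 𝒢 μ) (ε : ℝ) {n₀ N : ℕ} (hN : n₀ ≤ N) :
    ε * μ.real {ω | ∃ k, n₀ ≤ k ∧ k ≤ N ∧ ε ≤ f k ω} +
      ∫ ω in {ω | ∃ k, n₀ ≤ k ∧ k ≤ N ∧ ε ≤ f k ω}ᶜ, f N ω ∂μ ≤ ∫ ω, f n₀ ω ∂μ := by
  set A : ℕ → Set Ω := fun N => {ω | ∃ k, n₀ ≤ k ∧ k ≤ N ∧ ε ≤ f k ω}
  have hA N : MeasurableSet (A N) :=
    𝒢.le N _ (hf.stronglyAdapted.measurableSet_exists_le_le ε n₀ N)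
  have hB N : MeasurableSet {ω | ε ≤ f N ω} :=
    measurableSet_le measurable_const ((hf.stronglyMeasurable N).measurable.mono (𝒢.le N) le_rfl)
  change ε * μ.real (A N) + ∫ ω in (A N)ᶜ, f N ω ∂μ ≤ _
  induction N, hN using Nat.le_induction with
  | base =>
    have hAn₀ : A n₀ = {ω | ε ≤ f n₀ ω} := by
      ext ω; simp only [A, Set.mem_ofPred_eq]
      exact ⟨fun ⟨k, h₀, hk, h⟩ => le_antisymm hk h₀ ▸ h, fun h => ⟨n₀, le_rfl, le_rfl, h⟩⟩
    rw [hAn₀, ← integral_add_compl (hB n₀) (hf.integrable n₀)]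
    gcongr
    exact setIntegral_ge_of_const_le_real (hB n₀) (measure_ne_top _ _) (fun ω h => h)
      (hf.integrable n₀).integrableOn
  | succ N hN ih =>
    set B := {ω | ε ≤ f (N + 1) ω}
    have hAs : A (N + 1) = A N ∪ B := setOf_exists_le_le_succ (hN.trans N.le_succ)
    have hmeas : μ.real (A (N + 1)) = μ.real (A N) + μ.real ((A N)ᶜ ∩ B) := by
      rw [hAs, ← Set.union_sdiff_self, measureReal_union Set.disjoint_sdiff_right
        ((hB _).diff (hA N)), Set.sdiff_eq, Set.inter_comm]
    have hcompl : (A (N + 1))ᶜ = (A N)ᶜ \ B := by rw [hAs, Set.compl_union, Set.sdiff_eq]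
    have hsplit := integral_inter_add_sdiff (μ := μ) (hB (N + 1))
      ((hf.integrable (N + 1)).integrableOn (s := (A N)ᶜ))
    have hdecr : ∫ ω in (A N)ᶜ, f (N + 1) ω ∂μ ≤ ∫ ω in (A N)ᶜ, f N ω ∂μ :=
      hf.setIntegral_le N.le_succ (hf.stronglyAdapted.measurableSet_exists_le_le ε n₀ N).compl
    have hhit : ε * μ.real ((A N)ᶜ ∩ B) ≤ ∫ ω in (A N)ᶜ ∩ B, f (N + 1) ω ∂μ :=
      setIntegral_ge_of_const_le_real ((hA N).compl.inter (hB _)) (measure_ne_top _ _)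
        (fun ω h => h.2) (hf.integrable (N + 1)).integrableOn
    rw [hmeas, hcompl]
    linarith

theorem Supermartingale.mul_measureReal_exists_le_le_integral [IsFiniteMeasure μ]
    (hf : Supermartingale f 𝒢 μ) (hnonneg : 0 ≤ f) (ε : ℝ) {n₀ N : ℕ} (hN : n₀ ≤ N) :
    ε * μ.real {ω | ∃ k, n₀ ≤ k ∧ k ≤ N ∧ ε ≤ f k ω} ≤ ∫ ω, f n₀ ω ∂μ :=
  (le_add_of_nonneg_right (setIntegral_nonneg
    (𝒢.le N _ (hf.stronglyAdapted.measurableSet_exists_le_le ε n₀ N)).compl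
    fun ω _ => hnonneg N ω)).trans (hf.mul_measureReal_add_setIntegral_compl_le ε hN)

theorem Integrable.sqrt [IsFiniteMeasure μ] {g : Ω → ℝ} (hg : Integrable g μ) :
    Integrable (fun ω => √(g ω)) μ :=
  ((integrable_const 1).add hg.abs).mono' (Real.continuous_sqrt.comp_aestronglyMeasurable hg.1) <|
    ae_of_all _ fun ω => by
      rw [Real.norm_of_nonneg (Real.sqrt_nonneg _), Pi.add_apply]
      exact (Real.sqrt_le_sqrt (le_abs_self _)).trans
        (Real.sqrt_le_iff.2 ⟨by positivity, by nlinarith [abs_nonneg (g ω)]⟩)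

theorem measure_exists_ge_le_ofReal [IsFiniteMeasure μ] {ε B : ℝ} (hε : 0 < ε) {n₀ : ℕ}
    (h : ∀ N ≥ n₀, ε * μ.real {ω | ∃ k, n₀ ≤ k ∧ k ≤ N ∧ ε ≤ f k ω} ≤ B) :
    μ {ω | ∃ k, n₀ ≤ k ∧ ε ≤ f k ω} ≤ ENNReal.ofReal (B / ε) := by
  set A : ℕ → Set Ω := fun N => {ω | ∃ k, n₀ ≤ k ∧ k ≤ N ∧ ε ≤ f k ω}
  have hA : Monotone A := fun N N' h ω ⟨k, h₀, hk, hf⟩ => ⟨k, h₀, hk.trans h, hf⟩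
  have hU : {ω | ∃ k, n₀ ≤ k ∧ ε ≤ f k ω} = ⋃ N, A N := by
    ext ω
    simp only [Set.mem_ofPred_eq, Set.mem_iUnion, A]
    exact ⟨fun ⟨k, h₀, hf⟩ => ⟨k, k, h₀, le_rfl, hf⟩, fun ⟨_, k, h₀, _, hf⟩ => ⟨k, h₀, hf⟩⟩
  rw [hU, hA.measure_iUnion]
  refine iSup_le fun N => (measure_mono (hA (le_max_left N n₀))).trans ?_
  rw [← ofReal_measureReal]
  exact ENNReal.ofReal_le_ofReal ((le_div_iff₀' hε).2 (h _ (le_max_right _ _)))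

theorem condExp_le_add_condExp_of_le {m : MeasurableSpace Ω} (hm : m ≤ m0) [IsFiniteMeasure μ]
    {f g h : Ω → ℝ} (hg : StronglyMeasurable[m] g) (hgi : Integrable g μ) (hh : Integrable h μ)
    (hfgh : μ[f | m] ≤ᵐ[μ] g + h) : μ[f | m] ≤ᵐ[μ] g + μ[h | m] := by
  have h1 := condExp_mono (m := m) integrable_condExp (hgi.add hh) hfgh
  rw [condExp_of_stronglyMeasurable hm stronglyMeasurable_condExp integrable_condExp] at h1
  filter_upwards [h1, condExp_add hgi hh m] with ω h1 h2
  rwa [h2, Pi.add_apply, condExp_of_stronglyMeasurable hm hg hgi] at h1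

end MeasureTheory

section Envelope

variable {Ω : Type*} {m0 : MeasurableSpace Ω} {μ : Measure Ω} {𝒢 : Filtration ℕ m0}
  {b : ℕ → ℝ} {W ξ : ℕ → Ω → ℝ} {N : ℕ}

noncomputable def compensatedEnergy (μ : Measure Ω) (𝒢 : Filtration ℕ m0) (b : ℕ → ℝ)
    (W ξ : ℕ → Ω → ℝ) (N m : ℕ) (ω : Ω) : ℝ :=
  (∏ i ∈ Ico m N, (1 + b i)) * (W m ω ^ 2 + μ[∑ i ∈ Ico m N, ξ i | 𝒢 m] ω)

theorem condExp_sum_nonneg (hξnn : ∀ n, 0 ≤ᵐ[μ] ξ n) (s : Finset ℕ) (m : MeasurableSpace Ω) :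
    0 ≤ᵐ[μ] μ[∑ i ∈ s, ξ i | m] :=
  condExp_nonneg <| by
    filter_upwards [ae_all_iff.2 hξnn] with ω hω
    simpa [Finset.sum_apply] using sum_nonneg fun i _ => hω i

theorem compensatedEnergy_nonneg (hb : ∀ n, 0 ≤ b n) (hξnn : ∀ n, 0 ≤ᵐ[μ] ξ n) (m : ℕ) :
    0 ≤ᵐ[μ] compensatedEnergy μ 𝒢 b W ξ N m := by
  filter_upwards [condExp_sum_nonneg hξnn (Ico m N) (𝒢 m)] with ω hω
  exact mul_nonneg (prod_nonneg fun i _ => by linarith [hb i]) (add_nonneg (sq_nonneg _) hω)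

theorem condExp_compensatedEnergy_succ_le [IsFiniteMeasure μ] (hb : ∀ n, 0 ≤ b n)
    (hW : StronglyAdapted 𝒢 W) (hW2 : ∀ n, Integrable (fun ω => W n ω ^ 2) μ)
    (hξ : ∀ n, Integrable (ξ n) μ) (hξnn : ∀ n, 0 ≤ᵐ[μ] ξ n)
    (hrec : ∀ n, μ[fun ω => W (n + 1) ω ^ 2 | 𝒢 n] ≤ᵐ[μ]
      fun ω => (1 + b n) * W n ω ^ 2 + ξ n ω) {m : ℕ} (hm : m < N) :
    μ[compensatedEnergy μ 𝒢 b W ξ N (m + 1) | 𝒢 m] ≤ᵐ[μ] compensatedEnergy μ 𝒢 b W ξ N m := by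
  set p := ∏ i ∈ Ico (m + 1) N, (1 + b i)
  set F := ∑ i ∈ Ico (m + 1) N, ξ i
  have hF : Integrable F μ := integrable_finsetSum' _ fun i _ => hξ i
  have hp : ∏ i ∈ Ico m N, (1 + b i) = (1 + b m) * p := prod_eq_prod_Ico_succ_bot hm _
  have hFm : ∑ i ∈ Ico m N, ξ i = ξ m + F := sum_eq_sum_Ico_succ_bot hm _
  have hE : compensatedEnergy μ 𝒢 b W ξ N (m + 1) =
      p • ((fun ω => W (m + 1) ω ^ 2) + μ[F | 𝒢 (m + 1)]) := rfl
  rw [hE]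
  filter_upwards
    [condExp_smul (m := 𝒢 m) (μ := μ) p ((fun ω => W (m + 1) ω ^ 2) + μ[F | 𝒢 (m + 1)]),
    condExp_add (m := 𝒢 m) (hW2 (m + 1)) integrable_condExp,
    condExp_condExp_of_le (μ := μ) (f := F) (𝒢.mono m.le_succ) (𝒢.le (m + 1)),
    condExp_add (m := 𝒢 m) (hξ m) hF,
    condExp_le_add_condExp_of_le (𝒢.le m) (((hW m).pow 2).const_mul (1 + b m))
      ((hW2 m).const_mul _) (hξ m) (hrec m), condExp_sum_nonneg hξnn (Ico m N) (𝒢 m)]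
    with ω h1 h2 h3 h4 h5 h6
  rw [h1, Pi.smul_apply, h2, Pi.add_apply, h3]
  simp only [compensatedEnergy, hp, hFm, h4, smul_eq_mul, Pi.add_apply, Pi.pow_apply] at h5 h6 ⊢
  have hp0 : 0 ≤ p := prod_nonneg fun i _ => by linarith [hb i]
  rw [Pi.zero_apply] at h6
  nlinarith [mul_le_mul_of_nonneg_left h5 hp0, mul_nonneg (mul_nonneg hp0 (hb m)) h6]

theorem stronglyMeasurable_compensatedEnergy (hW : StronglyAdapted 𝒢 W) (m : ℕ) :
    StronglyMeasurable[𝒢 m] (compensatedEnergy μ 𝒢 b W ξ N m) :=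
  ((hW m).pow 2 |>.add stronglyMeasurable_condExp).const_mul _

theorem integrable_compensatedEnergy (hW2 : ∀ n, Integrable (fun ω => W n ω ^ 2) μ) (m : ℕ) :
    Integrable (compensatedEnergy μ 𝒢 b W ξ N m) μ :=
  ((hW2 m).add integrable_condExp).const_mul _

/-- Frozen from the horizon `N` on, so that it is a supermartingale for all times. -/
noncomputable def energyEnvelope (μ : Measure Ω) (𝒢 : Filtration ℕ m0) (b : ℕ → ℝ)
    (W ξ : ℕ → Ω → ℝ) (N m : ℕ) (ω : Ω) : ℝ :=
  √(compensatedEnergy μ 𝒢 b W ξ N (min m N) ω)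

theorem supermartingale_energyEnvelope [IsFiniteMeasure μ] (hb : ∀ n, 0 ≤ b n)
    (hW : StronglyAdapted 𝒢 W) (hW2 : ∀ n, Integrable (fun ω => W n ω ^ 2) μ)
    (hξ : ∀ n, Integrable (ξ n) μ) (hξnn : ∀ n, 0 ≤ᵐ[μ] ξ n)
    (hrec : ∀ n, μ[fun ω => W (n + 1) ω ^ 2 | 𝒢 n] ≤ᵐ[μ]
      fun ω => (1 + b n) * W n ω ^ 2 + ξ n ω) :
    Supermartingale (energyEnvelope μ 𝒢 b W ξ N) 𝒢 μ := by
  have hadapted : StronglyAdapted 𝒢 (energyEnvelope μ 𝒢 b W ξ N) := fun m =>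
    Real.continuous_sqrt.comp_stronglyMeasurable
      ((stronglyMeasurable_compensatedEnergy hW _).mono (𝒢.mono (min_le_left m N)))
  refine supermartingale_nat hadapted (fun m => (integrable_compensatedEnergy hW2 _).sqrt)
    fun m => ?_
  rcases lt_or_ge m N with hm | hm
  · have hval : ∀ k ≤ N, energyEnvelope μ 𝒢 b W ξ N k =
        fun ω => √(compensatedEnergy μ 𝒢 b W ξ N k ω) := fun k hk => by
      ext ω; rw [energyEnvelope, min_eq_left hk]
    have hjensen := Real.strictConcaveOn_sqrt.concaveOn.condExp_map_le (𝒢.le m)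
      Real.continuous_sqrt.continuousOn.upperSemicontinuousOn
      (compensatedEnergy_nonneg (𝒢 := 𝒢) (N := N) hb hξnn (m + 1)) isClosed_Ici
      (integrable_compensatedEnergy hW2 (m + 1)) (integrable_compensatedEnergy hW2 (m + 1)).sqrt
    rw [hval m hm.le, hval (m + 1) hm]
    filter_upwards [hjensen, condExp_compensatedEnergy_succ_le hb hW hW2 hξ hξnn hrec hm]
      with ω h1 h2
    exact h1.trans (Real.sqrt_le_sqrt h2)
  · have hstop : energyEnvelope μ 𝒢 b W ξ N (m + 1) = energyEnvelope μ 𝒢 b W ξ N m := by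
      ext ω; rw [energyEnvelope, energyEnvelope, min_eq_right hm, min_eq_right (hm.trans m.le_succ)]
    rw [hstop, condExp_of_stronglyMeasurable (𝒢.le m) (hadapted m)
      (integrable_compensatedEnergy hW2 _).sqrt]

theorem le_energyEnvelope (hb : ∀ n, 0 ≤ b n) (hξnn : ∀ n, 0 ≤ᵐ[μ] ξ n) :
    ∀ᵐ ω ∂μ, ∀ k ≤ N, W k ω ≤ energyEnvelope μ 𝒢 b W ξ N k ω := by
  filter_upwards [ae_all_iff.2 fun k => condExp_sum_nonneg hξnn (Ico k N) (𝒢 k)] with ω hω k hk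
  rw [energyEnvelope, min_eq_left hk, compensatedEnergy]
  refine Real.le_sqrt_of_sq_le ?_
  have hp : 1 ≤ ∏ i ∈ Ico k N, (1 + b i) := one_le_prod fun i _ => le_add_of_nonneg_right (hb i)
  have hC := hω k
  rw [Pi.zero_apply] at hC
  nlinarith [sq_nonneg (W k ω)]

theorem integral_energyEnvelope_le [IsProbabilityMeasure μ] (hb : ∀ n, 0 ≤ b n)
    (hW0 : ∀ n ω, 0 ≤ W n ω) (hW1 : ∀ n, Integrable (W n) μ)
    (hW2 : ∀ n, Integrable (fun ω => W n ω ^ 2) μ) (hξ : ∀ n, Integrable (ξ n) μ)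
    (hξnn : ∀ n, 0 ≤ᵐ[μ] ξ n) {n₀ : ℕ} (hn₀ : n₀ ≤ N) :
    ∫ ω, energyEnvelope μ 𝒢 b W ξ N n₀ ω ∂μ ≤
      √(∏ i ∈ Ico n₀ N, (1 + b i)) * (∫ ω, W n₀ ω ∂μ + √(∑ i ∈ Ico n₀ N, ∫ ω, ξ i ω ∂μ)) := by
  set C := μ[∑ i ∈ Ico n₀ N, ξ i | 𝒢 n₀]
  have hC : Integrable C μ := integrable_condExp
  have hCnn : 0 ≤ᵐ[μ] C := condExp_sum_nonneg hξnn _ _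
  have hpointwise : ∀ᵐ ω ∂μ, energyEnvelope μ 𝒢 b W ξ N n₀ ω ≤
      √(∏ i ∈ Ico n₀ N, (1 + b i)) * (W n₀ ω + √(C ω)) := by
    filter_upwards [hCnn] with ω hω
    rw [Pi.zero_apply] at hω
    rw [energyEnvelope, min_eq_left hn₀, compensatedEnergy, Real.sqrt_mul
      (prod_nonneg fun i _ => by linarith [hb i])]
    gcongr
    exact Real.sqrt_le_iff.2 ⟨by positivity [hW0 n₀ ω],
      by nlinarith [Real.sq_sqrt hω, mul_nonneg (hW0 n₀ ω) (Real.sqrt_nonneg (C ω))]⟩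
  have hjensen : ∫ ω, √(C ω) ∂μ ≤ √(∫ ω, C ω ∂μ) :=
    Real.strictConcaveOn_sqrt.concaveOn.le_map_integral Real.continuous_sqrt.continuousOn
      isClosed_Ici hCnn hC hC.sqrt
  have hCint : ∫ ω, C ω ∂μ = ∑ i ∈ Ico n₀ N, ∫ ω, ξ i ω ∂μ := by
    rw [integral_condExp (𝒢.le n₀)]
    simp only [Finset.sum_apply]
    exact integral_finsetSum _ fun i _ => hξ i
  calc ∫ ω, energyEnvelope μ 𝒢 b W ξ N n₀ ω ∂μ
      ≤ ∫ ω, √(∏ i ∈ Ico n₀ N, (1 + b i)) * (W n₀ ω + √(C ω)) ∂μ :=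
        integral_mono_ae (integrable_compensatedEnergy hW2 _).sqrt
          (((hW1 n₀).add hC.sqrt).const_mul _) hpointwise
    _ = √(∏ i ∈ Ico n₀ N, (1 + b i)) * (∫ ω, W n₀ ω ∂μ + ∫ ω, √(C ω) ∂μ) := by
        rw [integral_const_mul, integral_add (hW1 n₀) hC.sqrt]
    _ ≤ _ := by rw [← hCint]; gcongr

theorem integral_le_and_measure_le_of_condExp_sq_succ_le [IsProbabilityMeasure μ]
    (hb : ∀ n, 0 ≤ b n) (hW0 : ∀ n ω, 0 ≤ W n ω) (hW : StronglyAdapted 𝒢 W)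
    (hW1 : ∀ n, Integrable (W n) μ) (hW2 : ∀ n, Integrable (fun ω => W n ω ^ 2) μ)
    (hξ : ∀ n, Integrable (ξ n) μ) (hξnn : ∀ n, 0 ≤ᵐ[μ] ξ n)
    (hrec : ∀ n, μ[fun ω => W (n + 1) ω ^ 2 | 𝒢 n] ≤ᵐ[μ]
      fun ω => (1 + b n) * W n ω ^ 2 + ξ n ω) {n₀ : ℕ} {B : ℝ}
    (hB : ∀ N, √(∏ i ∈ Ico n₀ N, (1 + b i)) *
      (∫ ω, W n₀ ω ∂μ + √(∑ i ∈ Ico n₀ N, ∫ ω, ξ i ω ∂μ)) ≤ B) :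
    (∀ N ≥ n₀, ∫ ω, W N ω ∂μ ≤ B) ∧
      ∀ ε > 0, μ {ω | ∃ k, n₀ ≤ k ∧ ε ≤ W k ω} ≤ ENNReal.ofReal (B / ε) := by
  have hZ (N : ℕ) := supermartingale_energyEnvelope (N := N) hb hW hW2 hξ hξnn hrec
  have hZB {N : ℕ} (hN : n₀ ≤ N) : ∫ ω, energyEnvelope μ 𝒢 b W ξ N n₀ ω ∂μ ≤ B :=
    (integral_energyEnvelope_le hb hW0 hW1 hW2 hξ hξnn hN).trans (hB N)
  refine ⟨fun N hN => ?_, fun ε hε => measure_exists_ge_le_ofReal hε fun N hN => ?_⟩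
  · calc ∫ ω, W N ω ∂μ ≤ ∫ ω, energyEnvelope μ 𝒢 b W ξ N N ω ∂μ :=
          integral_mono_ae (hW1 N) ((hZ N).integrable N) <| by
            filter_upwards [le_energyEnvelope (𝒢 := 𝒢) (N := N) hb hξnn] with ω h
              using h N le_rfl
      _ ≤ ∫ ω, energyEnvelope μ 𝒢 b W ξ N n₀ ω ∂μ := by
          simpa using (hZ N).setIntegral_le hN MeasurableSet.univ
      _ ≤ B := hZB hN
  · have hsub : μ {ω | ∃ k, n₀ ≤ k ∧ k ≤ N ∧ ε ≤ W k ω} ≤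
        μ {ω | ∃ k, n₀ ≤ k ∧ k ≤ N ∧ ε ≤ energyEnvelope μ 𝒢 b W ξ N k ω} :=
      measure_mono_ae <| by
        filter_upwards [le_energyEnvelope (𝒢 := 𝒢) (N := N) hb hξnn] with ω h
        exact fun ⟨k, h₀, hk, hεk⟩ => ⟨k, h₀, hk, hεk.trans (h k hk)⟩
    calc ε * μ.real {ω | ∃ k, n₀ ≤ k ∧ k ≤ N ∧ ε ≤ W k ω}
        ≤ ε * μ.real {ω | ∃ k, n₀ ≤ k ∧ k ≤ N ∧ ε ≤ energyEnvelope μ 𝒢 b W ξ N k ω} :=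
          mul_le_mul_of_nonneg_left (ENNReal.toReal_mono (measure_ne_top _ _) hsub) hε.le
      _ ≤ ∫ ω, energyEnvelope μ 𝒢 b W ξ N n₀ ω ∂μ :=
          (hZ N).mul_measureReal_exists_le_le_integral (fun _ _ => Real.sqrt_nonneg _) ε hN
      _ ≤ B := hZB hN

end Envelope

namespace RobbinsMonro

variable {Ω H : Type*} {mΩ : MeasurableSpace Ω} [MeasurableSpace H] {x y : ℕ → Ω → H}

abbrev iterateFiltration (x y : ℕ → Ω → H) (n : ℕ) : MeasurableSpace Ω :=
  MeasurableSpace.comap (x 0) inferInstance ⊔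
    ⨆ i ∈ Finset.range n,
      (MeasurableSpace.comap (x i) inferInstance ⊔ MeasurableSpace.comap (y i) inferInstance)

theorem iterateFiltration_mono : Monotone (iterateFiltration x y) := fun _ _ h =>
  sup_le_sup_left (biSup_mono fun _ hi => mem_range.2 ((mem_range.1 hi).trans_le h)) _

theorem iterateFiltration_le (hx : ∀ n, Measurable (x n)) (hy : ∀ n, Measurable (y n)) (n : ℕ) :
    iterateFiltration x y n ≤ mΩ :=
  sup_le (hx 0).comap_le (iSup₂_le fun i _ => sup_le (hx i).comap_le (hy i).comap_le)

variable [NormedAddCommGroup H] [BorelSpace H] [SecondCountableTopology H] {a : ℕ → ℝ}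

section Measurability

variable [NormedSpace ℝ H]

theorem measurable_iterate (hx0 : Measurable (x 0)) (hy : ∀ n, Measurable (y n))
    (hrec : ∀ n ω, x (n + 1) ω = x n ω - a n • y n ω) (n : ℕ) : Measurable (x n) := by
  induction n with
  | zero => exact hx0
  | succ n ih =>
    rw [show x (n + 1) = fun ω => x n ω - a n • y n ω from funext (hrec n)]
    exact ih.sub ((hy n).const_smul (a n))

theorem measurable_iterate_iterateFiltration (hrec : ∀ n ω, x (n + 1) ω = x n ω - a n • y n ω)
    (n : ℕ) : Measurable[iterateFiltration x y n] (x n) := by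
  cases n with
  | zero => exact measurable_iff_comap_le.2 le_sup_left
  | succ n =>
    have h : MeasurableSpace.comap (x n) inferInstance ⊔ MeasurableSpace.comap (y n) inferInstance
        ≤ iterateFiltration x y (n + 1) :=
      le_sup_of_le_right (le_iSup₂_of_le n (self_mem_range_succ n) le_rfl)
    rw [show x (n + 1) = fun ω => x n ω - a n • y n ω from funext (hrec n)]
    exact (measurable_iff_comap_le.2 (le_sup_left.trans h)).sub
      ((measurable_iff_comap_le.2 (le_sup_right.trans h)).const_smul (a n))

theorem stronglyMeasurable_iterate_sub (hrec : ∀ n ω, x (n + 1) ω = x n ω - a n • y n ω) (z : H)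
    (n : ℕ) : StronglyMeasurable[iterateFiltration x y n] fun ω => x n ω - z :=
  ((measurable_iterate_iterateFiltration hrec n).sub_const z).stronglyMeasurable

end Measurability

section Step

variable [InnerProductSpace ℝ H] [CompleteSpace H] {P : Measure Ω} [IsFiniteMeasure P] {z : H}
  {c : ℝ} {D : Ω → ℝ}

theorem condExp_sq_dist_succ_le (hx : ∀ n, Measurable (x n)) (hy : ∀ n, Measurable (y n))
    (hrec : ∀ n ω, x (n + 1) ω = x n ω - a n • y n ω) {n : ℕ}
    (hx2 : Integrable (fun ω => ‖x n ω - z‖ ^ 2) P) (hy2 : Integrable (fun ω => ‖y n ω‖ ^ 2) P)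
    (hi : P[fun ω => ‖y n ω‖ ^ 2 | iterateFiltration x y n] ≤ᵐ[P]
      fun ω => c * ‖x n ω - z‖ ^ 2 + D ω) :
    P[fun ω => ‖x (n + 1) ω - z‖ ^ 2 | iterateFiltration x y n] ≤ᵐ[P] fun ω =>
      (1 + c * a n ^ 2) * ‖x n ω - z‖ ^ 2
        - 2 * a n * ⟪x n ω - z, P[y n | iterateFiltration x y n] ω⟫ + a n ^ 2 * D ω := by
  rw [show (fun ω => ‖x (n + 1) ω - z‖ ^ 2) = fun ω => ‖x n ω - z - a n • y n ω‖ ^ 2 from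
    funext fun ω => by rw [hrec, sub_right_comm]]
  exact condExp_norm_sub_smul_sq_le (iterateFiltration_le hx hy n)
    (stronglyMeasurable_iterate_sub hrec z n)
    ((memLp_two_iff_integrable_sq_norm ((hx n).sub_const z).aestronglyMeasurable).2 hx2)
    ((memLp_two_iff_integrable_sq_norm (hy n).aestronglyMeasurable).2 hy2) hi (a n)

theorem integral_sq_dist_succ_add_le (hx : ∀ n, Measurable (x n)) (hy : ∀ n, Measurable (y n))
    (hrec : ∀ n ω, x (n + 1) ω = x n ω - a n • y n ω) {n : ℕ}
    (hx2 : Integrable (fun ω => ‖x n ω - z‖ ^ 2) P) (hy2 : Integrable (fun ω => ‖y n ω‖ ^ 2) P)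
    (hD : Integrable D P)
    (hi : P[fun ω => ‖y n ω‖ ^ 2 | iterateFiltration x y n] ≤ᵐ[P]
      fun ω => c * ‖x n ω - z‖ ^ 2 + D ω) :
    ∫ ω, ‖x (n + 1) ω - z‖ ^ 2 ∂P
        + 2 * a n * ∫ ω, ⟪x n ω - z, P[y n | iterateFiltration x y n] ω⟫ ∂P ≤
      (1 + c * a n ^ 2) * ∫ ω, ‖x n ω - z‖ ^ 2 ∂P + a n ^ 2 * ∫ ω, D ω ∂P := by
  rw [show (fun ω => ‖x (n + 1) ω - z‖ ^ 2) = fun ω => ‖x n ω - z - a n • y n ω‖ ^ 2 from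
    funext fun ω => by rw [hrec, sub_right_comm]]
  exact integral_norm_sub_smul_sq_add_le (iterateFiltration_le hx hy n)
    (stronglyMeasurable_iterate_sub hrec z n)
    ((memLp_two_iff_integrable_sq_norm ((hx n).sub_const z).aestronglyMeasurable).2 hx2)
    ((memLp_two_iff_integrable_sq_norm (hy n).aestronglyMeasurable).2 hy2) hD hi (a n)

end Step

end RobbinsMonro

theorem robbins_monro_quantitative_sqrt_general
    {Ω : Type*} {mΩ : MeasurableSpace Ω} {P : Measure Ω} [IsProbabilityMeasure P]
    {H : Type*} [NormedAddCommGroup H] [InnerProductSpace ℝ H] [CompleteSpace H]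
    [TopologicalSpace.SeparableSpace H] [MeasurableSpace H] [BorelSpace H]
    (x y : ℕ → Ω → H) (a : ℕ → ℝ) (hann : ∀ n, 0 ≤ a n)
    (hx0meas : Measurable (x 0)) (hymeas : ∀ n, Measurable (y n))
    -- the Robbins-Monro iteration
    (hrec : ∀ n : ℕ, ∀ ω, x (n+1) ω = x n ω - a n • y n ω)
    (z : H) (L : ℝ)
    (hx2int : ∀ n, Integrable (fun ω => ‖x n ω - z‖^2) P)
    (hx1int : ∀ n, Integrable (fun ω => ‖x n ω - z‖) P)
    -- ‖x_0 − z‖² < L in mean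
    (hL : ∫ ω, ‖x 0 ω - z‖^2 ∂P < L)
    -- F_n := σ(x_0, y_0, …, x_{n−1}, y_{n−1})
    (ℱ : ℕ → MeasurableSpace Ω)
    (hℱ : ∀ n, ℱ n = MeasurableSpace.comap (x 0) inferInstance ⊔
        ⨆ i ∈ Finset.range n,
          (MeasurableSpace.comap (x i) inferInstance ⊔
            MeasurableSpace.comap (y i) inferInstance))
    (c d : ℝ) (hc : 0 < c) (hd : 0 < d)
    (dseq : ℕ → Ω → ℝ) (hdnn : ∀ n, 0 ≤ᵐ[P] dseq n) (hdint : ∀ n, Integrable (dseq n) P)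
    (hdsup : ∀ n, ∫ ω, dseq n ω ∂P ≤ d)
    (hy2int : ∀ n, Integrable (fun ω => ‖y n ω‖^2) P)
    -- (i) E[‖y_n‖²|F_n] ≤ c‖x_n − z‖² + d_n a.s.
    (hi : ∀ n, ∀ᵐ ω ∂P, (P[fun ω' => ‖y n ω'‖^2 | ℱ n]) ω ≤ c * ‖x n ω - z‖^2 + dseq n ω)
    -- (ii) ⟨x_n − z, E[y_n|F_n]⟩ ≥ 0 a.s.
    (hii : ∀ n, ∀ᵐ ω ∂P, 0 ≤ ⟪x n ω - z, (P[y n | ℱ n]) ω⟫)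
    -- (iii') simplified regularity modulus τ
    (τ : ℝ → ℝ) (hτpos : ∀ ε > (0:ℝ), 0 < τ ε)
    (hiii : ∀ ε > (0:ℝ), ∀ n : ℕ,
        ∫ ω, ⟪x n ω - z, (P[y n | ℱ n]) ω⟫ ∂P < τ ε →
        ∫ ω, ‖x n ω - z‖ ∂P < ε)
    -- (iv) Σ a_n = ∞ with rate θ, Σ a_n² < M with rate χ
    (θ : ℕ → ℝ → ℕ) (χ : ℝ → ℕ) (M : ℝ)
    (hθ : ∀ k : ℕ, ∀ b > (0:ℝ), b ≤ ∑ n ∈ Finset.Icc k (θ k b), a n)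
    (hasum : Summable fun n => a n ^ 2) (haM : (∑' n, a n ^ 2) < M)
    (hχ : ∀ ε > (0:ℝ), ∑' i : ℕ, a (χ ε + i) ^ 2 < ε) :
    -- (a) E[‖x_n − z‖] → 0 with rate ρ(ε) := θ(χ((K₁ε)²/d), K₂/τ(K₁ε))
    (∀ ε > (0:ℝ),
      ∀ n ≥ θ (χ ((Real.exp (-(c*M)/2) / 2 * ε)^2 / d))
          (Real.exp (c*M) * (L + d*M) / τ (Real.exp (-(c*M)/2) / 2 * ε)),
        ∫ ω, ‖x n ω - z‖ ∂P < ε) ∧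
    -- (b) x_n → z almost surely with rate ρ'(λ,ε) := ρ(λε)
    (∀ lam > (0:ℝ), ∀ ε > (0:ℝ),
      P {ω | ∃ n, θ (χ ((Real.exp (-(c*M)/2) / 2 * (lam * ε))^2 / d))
            (Real.exp (c*M) * (L + d*M) / τ (Real.exp (-(c*M)/2) / 2 * (lam * ε)))
          ≤ n ∧ ε ≤ ‖x n ω - z‖} < ENNReal.ofReal lam) := by
  have : SecondCountableTopology H := UniformSpace.secondCountable_of_separable H
  obtain rfl : ℱ = RobbinsMonro.iterateFiltration x y := funext hℱ
  have hx := RobbinsMonro.measurable_iterate hx0meas hymeas hrec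
  let 𝓕 : Filtration ℕ mΩ :=
    ⟨_, RobbinsMonro.iterateFiltration_mono, RobbinsMonro.iterateFiltration_le hx hymeas⟩
  have hstep (n : ℕ) : P[fun ω => ‖x (n + 1) ω - z‖ ^ 2 | 𝓕 n] ≤ᵐ[P]
      fun ω => (1 + c * a n ^ 2) * ‖x n ω - z‖ ^ 2 + a n ^ 2 * dseq n ω := by
    filter_upwards [RobbinsMonro.condExp_sq_dist_succ_le hx hymeas hrec (hx2int n) (hy2int n)
      (hi n), hii n] with ω h h'
    nlinarith [mul_nonneg (hann n) h']
  have hrate {ε : ℝ} (hε : 0 < ε) := exists_le_robbinsMonroRate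
    (e := fun n => ∫ ω, ‖x n ω - z‖ ^ 2 ∂P) (w := fun n => ∫ ω, ‖x n ω - z‖ ∂P)
    (g := fun n => ∫ ω, a n ^ 2 * dseq n ω ∂P) hann (fun n => integral_nonneg_of_ae (hii n))
    (fun n => integral_nonneg fun _ => sq_nonneg _)
    (fun n => integral_nonneg fun _ => norm_nonneg _)
    hc.le hd hasum haM.le hL
    (fun n => (RobbinsMonro.integral_sq_dist_succ_add_le hx hymeas hrec (hx2int n) (hy2int n)
      (hdint n) (hi n)).trans (by gcongr; exact hdsup n))
    (fun n => (integral_const_mul _ _).trans_le (by gcongr; exact hdsup n)) hτpos hiii hθ hχ hε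
  have hbound {n₀ : ℕ} {B : ℝ} :=
    integral_le_and_measure_le_of_condExp_sq_succ_le (n₀ := n₀) (B := B)
    (W := fun n ω => ‖x n ω - z‖) (fun n => by positivity) (fun n ω => norm_nonneg _)
    (fun n => (RobbinsMonro.stronglyMeasurable_iterate_sub hrec z n).norm)
    hx1int hx2int (fun n => (hdint n).const_mul _)
    (fun n => by filter_upwards [hdnn n] with ω h using mul_nonneg (sq_nonneg _) h) hstep
  refine ⟨fun ε hε n hn => ?_, fun lam hlam ε hε => ?_⟩
  · obtain ⟨n₀, hn₀, B, hBε, hB⟩ := hrate hε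
    exact ((hbound hB).1 n (hn₀.trans hn)).trans_lt hBε
  · obtain ⟨n₀, hn₀, B, hBε, hB⟩ := hrate (mul_pos hlam hε)
    calc P {ω | ∃ n, robbinsMonroRate θ χ τ c d L M (lam * ε) ≤ n ∧ ε ≤ ‖x n ω - z‖}
        ≤ P {ω | ∃ k, n₀ ≤ k ∧ ε ≤ ‖x k ω - z‖} :=
          measure_mono fun ω ⟨n, hn, h⟩ => ⟨n, hn₀.trans hn, h⟩
      _ ≤ ENNReal.ofReal (B / ε) := (hbound hB).2 ε hε
      _ < ENNReal.ofReal lam := (ENNReal.ofReal_lt_ofReal_iff hlam).2 ((div_lt_iff₀ hε).2 hBε)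

/-- The quantitative Robbins-Monro theorem with the s.i.c.c. function `f` instantiated by the
square root: the regularity condition becomes
`E[⟨x_n − z, E[y_n|F_n]⟩] < τ(ε) → E[‖x_n − z‖] < ε`, and with `K₁ := e^{−cM/2}/2` and
`K₂ := e^{cM}(L + dM)`, `ρ(ε) := θ(χ((K₁ε)²/d), K₂/τ(K₁ε))` is a rate for `E[‖x_n − z‖] → 0`
and `ρ'(λ,ε) := ρ(λε)` a rate of almost sure convergence for `x_n → z`. -/
theorem robbins_monro_quantitative_sqrt
    {Ω : Type*} {mΩ : MeasurableSpace Ω} {P : Measure Ω} [IsProbabilityMeasure P]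
    {H : Type*} [NormedAddCommGroup H] [InnerProductSpace ℝ H] [CompleteSpace H]
    [TopologicalSpace.SeparableSpace H] [MeasurableSpace H] [BorelSpace H]
    (x y : ℕ → Ω → H) (a : ℕ → ℝ) (hann : ∀ n, 0 ≤ a n)
    (hx0meas : Measurable (x 0)) (hymeas : ∀ n, Measurable (y n))
    (hyint : ∀ n, Integrable (y n) P)
    -- the Robbins-Monro iteration
    (hrec : ∀ n : ℕ, ∀ ω, x (n+1) ω = x n ω - a n • y n ω)
    (z : H) (L : ℝ) (hLpos : 0 < L)
    (hx2int : ∀ n, Integrable (fun ω => ‖x n ω - z‖^2) P)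
    (hx1int : ∀ n, Integrable (fun ω => ‖x n ω - z‖) P)
    -- ‖x_0 − z‖² < L in mean
    (hL : ∫ ω, ‖x 0 ω - z‖^2 ∂P < L)
    -- F_n := σ(x_0, y_0, …, x_{n−1}, y_{n−1})
    (ℱ : ℕ → MeasurableSpace Ω)
    (hℱ : ∀ n, ℱ n = MeasurableSpace.comap (x 0) inferInstance ⊔
        ⨆ i ∈ Finset.range n,
          (MeasurableSpace.comap (x i) inferInstance ⊔
            MeasurableSpace.comap (y i) inferInstance))
    (c d : ℝ) (hc : 0 < c) (hd : 0 < d)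
    (dseq : ℕ → Ω → ℝ) (hdnn : ∀ n, 0 ≤ᵐ[P] dseq n) (hdint : ∀ n, Integrable (dseq n) P)
    (hdsup : ∀ n, ∫ ω, dseq n ω ∂P ≤ d)
    (hy2int : ∀ n, Integrable (fun ω => ‖y n ω‖^2) P)
    -- (i) E[‖y_n‖²|F_n] ≤ c‖x_n − z‖² + d_n a.s.
    (hi : ∀ n, ∀ᵐ ω ∂P, (P[fun ω' => ‖y n ω'‖^2 | ℱ n]) ω ≤ c * ‖x n ω - z‖^2 + dseq n ω)
    -- (ii) ⟨x_n − z, E[y_n|F_n]⟩ ≥ 0 a.s.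
    (hii : ∀ n, ∀ᵐ ω ∂P, 0 ≤ ⟪x n ω - z, (P[y n | ℱ n]) ω⟫)
    -- (iii') simplified regularity modulus τ
    (τ : ℝ → ℝ) (hτpos : ∀ ε > (0:ℝ), 0 < τ ε)
    (hiii : ∀ ε > (0:ℝ), ∀ n : ℕ,
        ∫ ω, ⟪x n ω - z, (P[y n | ℱ n]) ω⟫ ∂P < τ ε →
        ∫ ω, ‖x n ω - z‖ ∂P < ε)
    -- (iv) Σ a_n = ∞ with rate θ, Σ a_n² < M with rate χ
    (θ : ℕ → ℝ → ℕ) (χ : ℝ → ℕ) (M : ℝ) (hMpos : 0 < M)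
    (hθ : ∀ k : ℕ, ∀ b > (0:ℝ), b ≤ ∑ n ∈ Finset.Icc k (θ k b), a n)
    (hasum : Summable fun n => a n ^ 2) (haM : (∑' n, a n ^ 2) < M)
    (hχ : ∀ ε > (0:ℝ), ∑' i : ℕ, a (χ ε + i) ^ 2 < ε) :
    -- (a) E[‖x_n − z‖] → 0 with rate ρ(ε) := θ(χ((K₁ε)²/d), K₂/τ(K₁ε))
    (∀ ε > (0:ℝ),
      ∀ n ≥ θ (χ ((Real.exp (-(c*M)/2) / 2 * ε)^2 / d))
          (Real.exp (c*M) * (L + d*M) / τ (Real.exp (-(c*M)/2) / 2 * ε)),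
        ∫ ω, ‖x n ω - z‖ ∂P < ε) ∧
    -- (b) x_n → z almost surely with rate ρ'(λ,ε) := ρ(λε)
    (∀ lam > (0:ℝ), ∀ ε > (0:ℝ),
      P {ω | ∃ n, θ (χ ((Real.exp (-(c*M)/2) / 2 * (lam * ε))^2 / d))
            (Real.exp (c*M) * (L + d*M) / τ (Real.exp (-(c*M)/2) / 2 * (lam * ε)))
          ≤ n ∧ ε ≤ ‖x n ω - z‖} < ENNReal.ofReal lam) :=
  robbins_monro_quantitative_sqrt_general (mΩ := mΩ) x y a hann hx0meas hymeas hrec z L hx2int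
    hx1int hL ℱ hℱ c d hc hd dseq hdnn hdint hdsup hy2int hi hii τ hτpos hiii θ χ M hθ hasum haM hχ
end
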